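/- arXiv:1404.3254 — 2 statements merged into one kernel-verified Lean document; each statement's English description precedes it below -/
import Mathlib

section
/- Let (u, d, P) be a classical solution of the incompressible Ericksen–Leslie system on ℝ³×[0,T). Then for every t ∈ (0,T), the function t ↦ ∫_{ℝ³} (|u|²/2 + W(d,∇d)) dx is differentiable and d/dt ∫_{ℝ³} (|u|²/2 + W(d,∇d)) dx + ∫_{ℝ³} (|∇u|² + |∂ₜd + (u·∇)d|²) dx = 0. -/
open MeasureTheory Real Set

noncomputable section

/-- Partial derivative of a scalar function on ℝ³ in the `j`-th coordinate direction. -/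
def pd (f : (Fin 3 → ℝ) → ℝ) (j : Fin 3) : (Fin 3 → ℝ) → ℝ :=
  fun x => fderiv ℝ f x (Pi.single j 1)

/-- Squared Euclidean norm of a vector in ℝ³. -/
def vnsq (v : Fin 3 → ℝ) : ℝ := ∑ i, (v i) ^ 2

/-- Squared Frobenius norm of the first-order derivative tensor of a map ℝ³ → ℝ³. -/
def nsq1 (f : (Fin 3 → ℝ) → Fin 3 → ℝ) (x : Fin 3 → ℝ) : ℝ :=
  ∑ i, ∑ j, (pd (fun y => f y i) j x) ^ 2

/-- Squared Frobenius norm of the second-order derivative tensor of a map ℝ³ → ℝ³. -/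
def nsq2 (f : (Fin 3 → ℝ) → Fin 3 → ℝ) (x : Fin 3 → ℝ) : ℝ :=
  ∑ i, ∑ j, ∑ k, (pd (pd (fun y => f y i) j) k x) ^ 2

/-- Cross product on ℝ³. -/
def crossV (a b : Fin 3 → ℝ) : Fin 3 → ℝ :=
  ![a 1 * b 2 - a 2 * b 1, a 2 * b 0 - a 0 * b 2, a 0 * b 1 - a 1 * b 0]

/-- `c(p) = (p₃₂ − p₂₃, p₁₃ − p₃₁, p₂₁ − p₁₂)`; when `p = ∇d` this is `curl d`. -/
def cMat (p : Fin 3 → Fin 3 → ℝ) : Fin 3 → ℝ :=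
  ![p 2 1 - p 1 2, p 0 2 - p 2 0, p 1 0 - p 0 1]

/-- The Oseen–Frank density
`W(z,p) = k₁ (tr p)² + k₂ (z · c(p))² + k₃ |z × c(p)|²`. -/
def OFW (k1 k2 k3 : ℝ) (z : Fin 3 → ℝ) (p : Fin 3 → Fin 3 → ℝ) : ℝ :=
  k1 * (p 0 0 + p 1 1 + p 2 2) ^ 2 + k2 * (∑ i, z i * cMat p i) ^ 2
    + k3 * ∑ i, (crossV z (cMat p) i) ^ 2

/-- `W_{p^i_j}(z,p)`: the partial derivative of the Oseen–Frank density in the entry `p i j`. -/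
def Wp (k1 k2 k3 : ℝ) (z : Fin 3 → ℝ) (p : Fin 3 → Fin 3 → ℝ) (i j : Fin 3) : ℝ :=
  fderiv ℝ (fun q => OFW k1 k2 k3 z q) p (Pi.single i (Pi.single j 1))

/-- `W_{d^i}(z,p)`: the partial derivative of the Oseen–Frank density in `z i`. -/
def Wz (k1 k2 k3 : ℝ) (z : Fin 3 → ℝ) (p : Fin 3 → Fin 3 → ℝ) (i : Fin 3) : ℝ :=
  fderiv ℝ (fun w => OFW k1 k2 k3 w p) z (Pi.single i 1)

/-- Jacobian matrix `(∇d)_{ij} = ∂_j d^i` of a map ℝ³ → ℝ³. -/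
def jac (f : (Fin 3 → ℝ) → Fin 3 → ℝ) (x : Fin 3 → ℝ) : Fin 3 → Fin 3 → ℝ :=
  fun i j => pd (fun y => f y i) j x

/-- Squared Frobenius norm of the third-order derivative tensor of a map ℝ³ → ℝ³. -/
def nsq3 (f : (Fin 3 → ℝ) → Fin 3 → ℝ) (x : Fin 3 → ℝ) : ℝ :=
  ∑ i, ∑ j, ∑ k, ∑ l, (pd (pd (pd (fun y => f y i) j) k) l x) ^ 2

/-- The L²(ℝ³) norm of a quantity whose pointwise squared magnitude is `g`. -/
def L2 (g : (Fin 3 → ℝ) → ℝ) : ℝ := Real.sqrt (∫ x, g x)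

open scoped ENNReal

/-- A classical solution of the incompressible Ericksen–Leslie system on `ℝ³ × [0,T)`
(`T ∈ (0,∞]`): smooth functions `u, d, P` satisfying the momentum equation, `div u = 0`,
`|d| = 1` and the director equation pointwise for `t ∈ [0,T)`, and which, for every
`t ∈ [0,T)`, satisfy `u(·,t) = 0` and `d(·,t) = d*` outside a fixed ball of radius `R`,
for some constant unit vector `d*`. -/
structure IsClassicalSolutionEL (k1 k2 k3 : ℝ) (T : ℝ≥0∞)
    (u d : (Fin 3 → ℝ) → ℝ → Fin 3 → ℝ) (P : (Fin 3 → ℝ) → ℝ → ℝ) : Prop where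
  smooth_u : ContDiff ℝ (⊤ : ℕ∞) (Function.uncurry u)
  smooth_d : ContDiff ℝ (⊤ : ℕ∞) (Function.uncurry d)
  smooth_P : ContDiff ℝ (⊤ : ℕ∞) (Function.uncurry P)
  momentum : ∀ (x : Fin 3 → ℝ) (t : ℝ), 0 ≤ t → ENNReal.ofReal t < T → ∀ i : Fin 3,
    deriv (fun s => u x s i) t + (∑ j, u x t j * pd (fun y => u y t i) j x)
        - (∑ j, pd (pd (fun y => u y t i) j) j x) + pd (fun y => P y t) i x
      = -(∑ j, pd (fun y => ∑ k, pd (fun y' => d y' t k) i y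
            * Wp k1 k2 k3 (d y t) (jac (fun y' => d y' t) y) k j) j x)
  div_free : ∀ (x : Fin 3 → ℝ) (t : ℝ), 0 ≤ t → ENNReal.ofReal t < T →
    (∑ i, pd (fun y => u y t i) i x) = 0
  unit_d : ∀ (x : Fin 3 → ℝ) (t : ℝ), 0 ≤ t → ENNReal.ofReal t < T →
    (∑ i, (d x t i) ^ 2) = 1
  director : ∀ (x : Fin 3 → ℝ) (t : ℝ), 0 ≤ t → ENNReal.ofReal t < T → ∀ i : Fin 3,
    deriv (fun s => d x s i) t + (∑ j, u x t j * pd (fun y => d y t i) j x)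
      = (∑ j, pd (fun y => Wp k1 k2 k3 (d y t) (jac (fun y' => d y' t) y) i j) j x)
          - Wz k1 k2 k3 (d x t) (jac (fun y' => d y' t) x) i
          - (∑ k, ((∑ j, pd (fun y =>
                Wp k1 k2 k3 (d y t) (jac (fun y' => d y' t) y) k j) j x)
              - Wz k1 k2 k3 (d x t) (jac (fun y' => d y' t) x) k) * d x t k) * d x t i
  far_field : ∃ dstar : Fin 3 → ℝ, (∑ i, (dstar i) ^ 2) = 1 ∧ ∃ R : ℝ, 0 < R ∧
    ∀ (x : Fin 3 → ℝ) (t : ℝ), 0 ≤ t → ENNReal.ofReal t < T →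
      R ^ 2 < (∑ i, (x i) ^ 2) → u x t = 0 ∧ d x t = dstar

/-! ### Infrastructure -/

section Infra

abbrev V3 := Fin 3 → ℝ
abbrev M3 := Fin 3 → Fin 3 → ℝ

lemma V3_decomp (v : V3) : v = ∑ j, v j • (Pi.single j (1:ℝ) : V3) := by
  ext k; simp [Finset.sum_apply, Pi.single_apply]

lemma clm_eq_sum (L : V3 →L[ℝ] ℝ) (v : V3) : L v = ∑ j, v j * L (Pi.single j 1) := by
  conv_lhs => rw [V3_decomp v]
  simp [map_sum, _root_.map_smul, smul_eq_mul]

lemma M3_decomp (q : M3) :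
    q = ∑ i, ∑ j, q i j • (Pi.single i (Pi.single j (1:ℝ)) : M3) := by
  ext a b
  simp only [Finset.sum_apply, Pi.smul_apply, Pi.single_apply, smul_eq_mul]
  rw [Finset.sum_eq_single a]
  · simp [Pi.single_apply]
  · intro b' _ hb; simp [hb.symm]
  · simp

lemma clm_eq_sum_mat (L : M3 →L[ℝ] ℝ) (q : M3) :
    L q = ∑ i, ∑ j, q i j * L (Pi.single i (Pi.single j 1)) := by
  conv_lhs => rw [M3_decomp q]
  simp [map_sum, _root_.map_smul, smul_eq_mul]

lemma clm_prod_eq_sum (L : (V3 × M3) →L[ℝ] ℝ) (a : V3) (B : M3) :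
    L (a, B) = (∑ i, a i * L (Pi.single i 1, 0))
      + ∑ i, ∑ j, B i j * L (0, Pi.single i (Pi.single j 1)) := by
  have h : (a, B) = ((a, 0) : V3 × M3) + (0, B) := by simp
  rw [h, map_add]
  congr 1
  · have := clm_eq_sum (L.comp (ContinuousLinearMap.inl ℝ V3 M3)) a
    simpa using this
  · have := clm_eq_sum_mat (L.comp (ContinuousLinearMap.inr ℝ V3 M3)) B
    simpa using this

variable {E F G' : Type*} [NormedAddCommGroup E] [NormedSpace ℝ E]
  [NormedAddCommGroup F] [NormedSpace ℝ F] [NormedAddCommGroup G'] [NormedSpace ℝ G']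

lemma diffAt_partial_fst {Φ : E × F → G'} {a : E} {b : F} (h : DifferentiableAt ℝ Φ (a,b)) :
    DifferentiableAt ℝ (fun y => Φ (y, b)) a :=
  h.comp a ((differentiableAt_id.prodMk (differentiableAt_const b)))

lemma fderiv_partial_fst {Φ : E × F → G'} {a : E} {b : F} (h : DifferentiableAt ℝ Φ (a,b)) (v : E) :
    fderiv ℝ (fun y => Φ (y, b)) a v = fderiv ℝ Φ (a,b) (v, 0) := by
  have h1 : HasFDerivAt (fun y : E => (y, b)) (ContinuousLinearMap.inl ℝ E F) a :=
    hasFDerivAt_prodMk_left a b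
  have := (h.hasFDerivAt.comp a h1).fderiv
  show (fderiv ℝ (Φ ∘ fun y => (y, b)) a) v = _
  rw [this]; rfl

lemma fderiv_partial_snd {Φ : E × F → G'} {a : E} {b : F} (h : DifferentiableAt ℝ Φ (a,b)) (v : F) :
    fderiv ℝ (fun y => Φ (a, y)) b v = fderiv ℝ Φ (a,b) (0, v) := by
  have h1 : HasFDerivAt (fun y : F => (a, y)) (ContinuousLinearMap.inr ℝ E F) b :=
    hasFDerivAt_prodMk_right a b
  have := (h.hasFDerivAt.comp b h1).fderiv
  show (fderiv ℝ (Φ ∘ fun y => (a, y)) b) v = _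
  rw [this]; rfl

lemma hasDerivAt_partial_snd {Φ : E × ℝ → G'} {a : E} {b : ℝ} (h : DifferentiableAt ℝ Φ (a,b)) :
    HasDerivAt (fun r => Φ (a, r)) (fderiv ℝ Φ (a,b) (0, 1)) b := by
  have h1 : HasFDerivAt (fun y : ℝ => (a, y)) (ContinuousLinearMap.inr ℝ E ℝ) b :=
    hasFDerivAt_prodMk_right a b
  have := (h.hasFDerivAt.comp b h1).hasDerivAt
  exact this

lemma deriv_partial_snd {Φ : E × ℝ → G'} {a : E} {b : ℝ} (h : DifferentiableAt ℝ Φ (a,b)) :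
    deriv (fun r => Φ (a, r)) b = fderiv ℝ Φ (a,b) (0, 1) :=
  (hasDerivAt_partial_snd h).deriv

lemma contDiff_fderiv_apply {Φ : E → ℝ} (h : ContDiff ℝ (⊤ : ℕ∞) Φ) (w : E) :
    ContDiff ℝ (⊤ : ℕ∞) (fun q => fderiv ℝ Φ q w) :=
  (h.fderiv_right (by simp)).clm_apply contDiff_const

lemma clairaut {Φ : E → ℝ} (h : ContDiff ℝ (⊤ : ℕ∞) Φ) (x : E) (a b : E) :
    fderiv ℝ (fun y => fderiv ℝ Φ y a) x b = fderiv ℝ (fun y => fderiv ℝ Φ y b) x a := by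
  have hd : DifferentiableAt ℝ (fderiv ℝ Φ) x :=
    ((h.fderiv_right (m := (⊤ : ℕ∞)) (by simp)).differentiable (by simp)).differentiableAt
  have key : ∀ v : E, fderiv ℝ (fun y => fderiv ℝ Φ y v) x
      = (ContinuousLinearMap.apply ℝ ℝ v).comp (fderiv ℝ (fderiv ℝ Φ) x) := by
    intro v
    exact (((ContinuousLinearMap.apply ℝ ℝ v).hasFDerivAt).comp x hd.hasFDerivAt).fderiv
  rw [key a, key b]
  have hsymm := (h.contDiffAt (x := x)).isSymmSndFDerivAt (by simp only [minSmoothness_of_isRCLikeNormedField]; exact WithTop.coe_le_coe.2 (le_top : (2:ℕ∞) ≤ ⊤))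
  exact (hsymm b a).symm ▸ rfl

/-! pd arithmetic -/

lemma pd_mul {f g : V3 → ℝ} {x : V3} (hf : DifferentiableAt ℝ f x)
    (hg : DifferentiableAt ℝ g x) (j : Fin 3) :
    pd (fun y => f y * g y) j x = f x * pd g j x + pd f j x * g x := by
  unfold pd
  rw [fderiv_fun_mul hf hg]
  simp [mul_comm]

lemma pd_add {f g : V3 → ℝ} {x : V3} (hf : DifferentiableAt ℝ f x)
    (hg : DifferentiableAt ℝ g x) (j : Fin 3) :
    pd (fun y => f y + g y) j x = pd f j x + pd g j x := by
  unfold pd; rw [fderiv_fun_add hf hg]; rfl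

lemma pd_sub {f g : V3 → ℝ} {x : V3} (hf : DifferentiableAt ℝ f x)
    (hg : DifferentiableAt ℝ g x) (j : Fin 3) :
    pd (fun y => f y - g y) j x = pd f j x - pd g j x := by
  unfold pd; rw [fderiv_fun_sub hf hg]; rfl

lemma pd_sum {ι : Type*} (s : Finset ι) (f : ι → V3 → ℝ) {x : V3}
    (hf : ∀ i ∈ s, DifferentiableAt ℝ (f i) x) (j : Fin 3) :
    pd (fun y => ∑ i ∈ s, f i y) j x = ∑ i ∈ s, pd (f i) j x := by
  unfold pd
  rw [fderiv_fun_sum hf]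
  simp

/-! Uncurried derivative operators -/

/-- spatial partial derivative of a spacetime scalar field -/
def DF (f : V3 × ℝ → ℝ) (j : Fin 3) : V3 × ℝ → ℝ :=
  fun q => fderiv ℝ f q (Pi.single j 1, 0)

/-- time derivative of a spacetime scalar field -/
def TF (f : V3 × ℝ → ℝ) : V3 × ℝ → ℝ := fun q => fderiv ℝ f q (0, 1)

lemma pd_slice {f : V3 × ℝ → ℝ} (hf : ContDiff ℝ (⊤ : ℕ∞) f) (s : ℝ) (j : Fin 3) (x : V3) :
    pd (fun y => f (y, s)) j x = DF f j (x, s) :=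
  fderiv_partial_fst (hf.differentiable (by simp)).differentiableAt _

lemma deriv_slice {f : V3 × ℝ → ℝ} (hf : ContDiff ℝ (⊤ : ℕ∞) f) (x : V3) (s : ℝ) :
    deriv (fun r => f (x, r)) s = TF f (x, s) :=
  deriv_partial_snd (hf.differentiable (by simp)).differentiableAt

lemma hasDerivAt_slice {f : V3 × ℝ → ℝ} (hf : ContDiff ℝ (⊤ : ℕ∞) f) (x : V3) (s : ℝ) :
    HasDerivAt (fun r => f (x, r)) (TF f (x, s)) s :=
  hasDerivAt_partial_snd (hf.differentiable (by simp)).differentiableAt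

lemma DF_contDiff {f : V3 × ℝ → ℝ} (hf : ContDiff ℝ (⊤ : ℕ∞) f) (j : Fin 3) :
    ContDiff ℝ (⊤ : ℕ∞) (DF f j) := contDiff_fderiv_apply hf _

lemma TF_contDiff {f : V3 × ℝ → ℝ} (hf : ContDiff ℝ (⊤ : ℕ∞) f) :
    ContDiff ℝ (⊤ : ℕ∞) (TF f) := contDiff_fderiv_apply hf _

lemma DF_DF_comm {f : V3 × ℝ → ℝ} (hf : ContDiff ℝ (⊤ : ℕ∞) f) (a b : Fin 3) (q : V3 × ℝ) :
    DF (DF f a) b q = DF (DF f b) a q :=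
  clairaut hf q (Pi.single a 1, 0) (Pi.single b 1, 0)

lemma TF_DF_comm {f : V3 × ℝ → ℝ} (hf : ContDiff ℝ (⊤ : ℕ∞) f) (j : Fin 3) (q : V3 × ℝ) :
    TF (DF f j) q = DF (TF f) j q := clairaut hf q _ _

end Infra

/-! ### Oseen–Frank layer -/

section OFWLayer

variable (k1 k2 k3 : ℝ)

def W2 : V3 × M3 → ℝ := fun zp => OFW k1 k2 k3 zp.1 zp.2

lemma contDiff_W2 : ContDiff ℝ (⊤ : ℕ∞) (W2 k1 k2 k3) := by
  unfold W2 OFW cMat crossV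
  simp only [Fin.sum_univ_three, Matrix.cons_val_zero, Matrix.cons_val_one, Matrix.head_cons,
    Matrix.cons_val_two, Matrix.tail_cons]
  fun_prop

def WzF (i : Fin 3) : V3 × M3 → ℝ :=
  fun zp => fderiv ℝ (W2 k1 k2 k3) zp (Pi.single i 1, 0)

def WpF (i j : Fin 3) : V3 × M3 → ℝ :=
  fun zp => fderiv ℝ (W2 k1 k2 k3) zp (0, Pi.single i (Pi.single j 1))

lemma contDiff_WpF (i j : Fin 3) : ContDiff ℝ (⊤ : ℕ∞) (WpF k1 k2 k3 i j) :=
  contDiff_fderiv_apply (contDiff_W2 k1 k2 k3) _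

lemma Wz_eq (z : V3) (p : M3) (i : Fin 3) :
    Wz k1 k2 k3 z p i = WzF k1 k2 k3 i (z, p) := by
  unfold Wz WzF
  exact fderiv_partial_fst (((contDiff_W2 k1 k2 k3).differentiable (by simp)).differentiableAt) _

lemma Wp_eq (z : V3) (p : M3) (i j : Fin 3) :
    Wp k1 k2 k3 z p i j = WpF k1 k2 k3 i j (z, p) := by
  unfold Wp WpF
  exact fderiv_partial_snd (((contDiff_W2 k1 k2 k3).differentiable (by simp)).differentiableAt) _

lemma fderiv_W2_decomp (zp : V3 × M3) (a : V3) (B : M3) :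
    fderiv ℝ (W2 k1 k2 k3) zp (a, B)
      = (∑ i, a i * WzF k1 k2 k3 i zp) + ∑ i, ∑ j, B i j * WpF k1 k2 k3 i j zp :=
  clm_prod_eq_sum _ a B

/-! chain-rule engine -/

variable {G : V3 × ℝ → V3}

def cF (G : V3 × ℝ → V3) (i : Fin 3) : V3 × ℝ → ℝ := fun q => G q i

def JF (G : V3 × ℝ → V3) : V3 × ℝ → M3 := fun q i j => DF (cF G i) j q

def gm (G : V3 × ℝ → V3) : V3 × ℝ → V3 × M3 := fun q => (G q, JF G q)

lemma contDiff_cF (hG : ContDiff ℝ (⊤ : ℕ∞) G) (i : Fin 3) : ContDiff ℝ (⊤ : ℕ∞) (cF G i) :=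
  contDiff_pi.1 hG i

lemma contDiff_JF_entry (hG : ContDiff ℝ (⊤ : ℕ∞) G) (i j : Fin 3) :
    ContDiff ℝ (⊤ : ℕ∞) (fun q => JF G q i j) :=
  DF_contDiff (contDiff_cF hG i) j

lemma contDiff_gm (hG : ContDiff ℝ (⊤ : ℕ∞) G) : ContDiff ℝ (⊤ : ℕ∞) (gm G) :=
  hG.prodMk (contDiff_pi.2 fun i => contDiff_pi.2 fun j => contDiff_JF_entry hG i j)

lemma fderiv_gm (hG : ContDiff ℝ (⊤ : ℕ∞) G) (q v) :
    fderiv ℝ (gm G) q v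
      = ((fun i => fderiv ℝ (cF G i) q v), fun i j => fderiv ℝ (DF (cF G i) j) q v) := by
  have hGd : DifferentiableAt ℝ G q := (hG.differentiable (by simp)).differentiableAt
  have hJd : DifferentiableAt ℝ (JF G) q := by
    apply differentiableAt_pi.2
    intro i
    apply differentiableAt_pi.2
    intro j
    exact ((contDiff_JF_entry hG i j).differentiable (by simp)).differentiableAt
  have h1 : fderiv ℝ (gm G) q = (fderiv ℝ G q).prod (fderiv ℝ (JF G) q) :=
    hGd.fderiv_prodMk hJd
  rw [h1]
  simp only [ContinuousLinearMap.prod_apply]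
  refine Prod.ext ?_ ?_
  · show fderiv ℝ G q v = _
    have h2 : fderiv ℝ G q = ContinuousLinearMap.pi (fun i => fderiv ℝ (cF G i) q) :=
      fderiv_pi (fun i => ((contDiff_cF hG i).differentiable (by simp)).differentiableAt)
    rw [h2]; rfl
  · show fderiv ℝ (JF G) q v = _
    have h2 : fderiv ℝ (JF G) q
        = ContinuousLinearMap.pi (fun i => fderiv ℝ (fun q' => JF G q' i) q) :=
      fderiv_pi (fun i => differentiableAt_pi.2 fun j =>
        ((contDiff_JF_entry hG i j).differentiable (by simp)).differentiableAt)
    rw [h2]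
    ext i j
    show fderiv ℝ (fun q' => JF G q' i) q v j = _
    have h3 : fderiv ℝ (fun q' => JF G q' i) q
        = ContinuousLinearMap.pi (fun j => fderiv ℝ (fun q' => JF G q' i j) q) :=
      fderiv_pi (fun j => ((contDiff_JF_entry hG i j).differentiable (by simp)).differentiableAt)
    rw [h3]; rfl

lemma fderiv_W2_gm (hG : ContDiff ℝ (⊤ : ℕ∞) G) (q v : V3 × ℝ) :
    fderiv ℝ (fun q' => W2 k1 k2 k3 (gm G q')) q v
      = (∑ i, fderiv ℝ (cF G i) q v * WzF k1 k2 k3 i (gm G q))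
        + ∑ i, ∑ j, fderiv ℝ (DF (cF G i) j) q v * WpF k1 k2 k3 i j (gm G q) := by
  have hW : HasFDerivAt (W2 k1 k2 k3) (fderiv ℝ (W2 k1 k2 k3) (gm G q)) (gm G q) :=
    (((contDiff_W2 k1 k2 k3).differentiable (by simp)) _).hasFDerivAt
  have hg : HasFDerivAt (gm G) (fderiv ℝ (gm G) q) q :=
    (((contDiff_gm hG).differentiable (by simp)) _).hasFDerivAt
  have hcomp := (hW.comp q hg).fderiv
  have : fderiv ℝ (fun q' => W2 k1 k2 k3 (gm G q')) q v
      = fderiv ℝ (W2 k1 k2 k3) (gm G q) (fderiv ℝ (gm G) q v) := by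
    show fderiv ℝ (W2 k1 k2 k3 ∘ gm G) q v = _
    rw [hcomp]; rfl
  rw [this, fderiv_gm hG, fderiv_W2_decomp]


lemma fderiv_half_vnsq (hG : ContDiff ℝ (⊤ : ℕ∞) G) (q v : V3 × ℝ) :
    fderiv ℝ (fun q' => vnsq (G q') / 2) q v = ∑ i, G q i * fderiv ℝ (cF G i) q v := by
  have hfun : (fun q' => vnsq (G q') / 2)
      = fun q' => ∑ i, (1/2 : ℝ) * (cF G i q' * cF G i q') := by
    funext q'
    rw [vnsq, Finset.sum_div]
    exact Finset.sum_congr rfl fun i _ => by rw [cF]; ring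
  rw [hfun]
  have h1 : ∀ i : Fin 3, HasFDerivAt (fun q' => (1/2 : ℝ) * (cF G i q' * cF G i q'))
      (G q i • fderiv ℝ (cF G i) q) q := by
    intro i
    have hci : HasFDerivAt (cF G i) (fderiv ℝ (cF G i) q) q :=
      (((contDiff_cF hG i).differentiable (by simp)) _).hasFDerivAt
    have h2 := (hci.mul hci).const_mul (1/2 : ℝ)
    have h3 : (1/2 : ℝ) • (cF G i q • fderiv ℝ (cF G i) q + cF G i q • fderiv ℝ (cF G i) q)
        = G q i • fderiv ℝ (cF G i) q := by
      rw [show cF G i q = G q i from rfl]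
      module
    rw [h3] at h2
    exact h2
  have key := HasFDerivAt.fun_sum (fun i (_ : i ∈ Finset.univ) => h1 i)
  rw [key.fderiv]
  simp [smul_eq_mul]

end OFWLayer

/-! ### Solution layer -/

section SolLayer

variable (k1 k2 k3 : ℝ) (u d : (Fin 3 → ℝ) → ℝ → Fin 3 → ℝ)

/-- energy density as spacetime field -/
def eF : V3 × ℝ → ℝ :=
  fun q => vnsq (Function.uncurry u q) / 2 + W2 k1 k2 k3 (gm (Function.uncurry d) q)

variable {u d}

lemma contDiff_vnsq_u (hu : ContDiff ℝ (⊤ : ℕ∞) (Function.uncurry u)) : ContDiff ℝ (⊤ : ℕ∞) (fun q => vnsq (Function.uncurry u q) / 2) := by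
  apply ContDiff.div_const
  apply ContDiff.sum
  intro i _
  exact (contDiff_cF hu i).pow 2

lemma contDiff_eF (hu : ContDiff ℝ (⊤ : ℕ∞) (Function.uncurry u)) (hd : ContDiff ℝ (⊤ : ℕ∞) (Function.uncurry d)) : ContDiff ℝ (⊤ : ℕ∞) (eF k1 k2 k3 u d) :=
  (contDiff_vnsq_u hu).add ((contDiff_W2 k1 k2 k3).comp (contDiff_gm hd))

/-- bridge: jac of a time slice -/
lemma jac_bridge (hd : ContDiff ℝ (⊤ : ℕ∞) (Function.uncurry d)) (s : ℝ) (x : V3) :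
    jac (fun y => d y s) x = JF (Function.uncurry d) (x, s) := by
  funext i j
  show pd (fun y => d y s i) j x = _
  exact (pd_slice (contDiff_cF hd i) s j x : pd (fun y => d y s i) j x = _)

lemma OFW_bridge (hd : ContDiff ℝ (⊤ : ℕ∞) (Function.uncurry d)) (s : ℝ) (x : V3) :
    OFW k1 k2 k3 (d x s) (jac (fun y => d y s) x)
      = W2 k1 k2 k3 (gm (Function.uncurry d) (x, s)) := by
  rw [jac_bridge hd]; rfl

lemma eF_bridge (hd : ContDiff ℝ (⊤ : ℕ∞) (Function.uncurry d)) (s : ℝ) (x : V3) :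
    vnsq (u x s) / 2 + OFW k1 k2 k3 (d x s) (jac (fun y => d y s) x)
      = eF k1 k2 k3 u d (x, s) := by
  rw [OFW_bridge k1 k2 k3 hd]; rfl

lemma Wp_bridge (hd : ContDiff ℝ (⊤ : ℕ∞) (Function.uncurry d)) (s : ℝ) (x : V3) (i j : Fin 3) :
    Wp k1 k2 k3 (d x s) (jac (fun y => d y s) x) i j
      = WpF k1 k2 k3 i j (gm (Function.uncurry d) (x, s)) := by
  rw [jac_bridge hd, Wp_eq]; rfl

lemma Wz_bridge (hd : ContDiff ℝ (⊤ : ℕ∞) (Function.uncurry d)) (s : ℝ) (x : V3) (i : Fin 3) :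
    Wz k1 k2 k3 (d x s) (jac (fun y => d y s) x) i
      = WzF k1 k2 k3 i (gm (Function.uncurry d) (x, s)) := by
  rw [jac_bridge hd, Wz_eq]; rfl

/-- time derivative of the energy density -/
lemma TF_eF (hu : ContDiff ℝ (⊤ : ℕ∞) (Function.uncurry u)) (hd : ContDiff ℝ (⊤ : ℕ∞) (Function.uncurry d)) (q : V3 × ℝ) :
    TF (eF k1 k2 k3 u d) q
      = (∑ i, cF (Function.uncurry u) i q * TF (cF (Function.uncurry u) i) q)
        + ((∑ i, TF (cF (Function.uncurry d) i) q
              * WzF k1 k2 k3 i (gm (Function.uncurry d) q))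
          + ∑ i, ∑ j, TF (DF (cF (Function.uncurry d) i) j) q
              * WpF k1 k2 k3 i j (gm (Function.uncurry d) q)) := by
  show fderiv ℝ (fun q' => vnsq (Function.uncurry u q') / 2
      + W2 k1 k2 k3 (gm (Function.uncurry d) q')) q (0, 1) = _
  have h1 : DifferentiableAt ℝ (fun q' => vnsq (Function.uncurry u q') / 2) q :=
    ((contDiff_vnsq_u hu).differentiable (by simp)) q
  have h2 : DifferentiableAt ℝ (fun q' => W2 k1 k2 k3 (gm (Function.uncurry d) q')) q :=
    (((contDiff_W2 k1 k2 k3).comp (contDiff_gm hd)).differentiable (by simp)) q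
  rw [fderiv_fun_add h1 h2]
  show fderiv ℝ (fun q' => vnsq (Function.uncurry u q') / 2) q (0,1)
      + fderiv ℝ (fun q' => W2 k1 k2 k3 (gm (Function.uncurry d) q')) q (0,1) = _
  rw [fderiv_half_vnsq hu, fderiv_W2_gm k1 k2 k3 hd]
  rfl

/-- spatial derivative of the Oseen-Frank part -/
lemma DF_W2_gm (hd : ContDiff ℝ (⊤ : ℕ∞) (Function.uncurry d)) (j : Fin 3) (q : V3 × ℝ) :
    DF (fun q' => W2 k1 k2 k3 (gm (Function.uncurry d) q')) j q
      = (∑ i, DF (cF (Function.uncurry d) i) j q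
            * WzF k1 k2 k3 i (gm (Function.uncurry d) q))
        + ∑ i, ∑ k, DF (DF (cF (Function.uncurry d) i) k) j q
            * WpF k1 k2 k3 i k (gm (Function.uncurry d) q) := by
  show fderiv ℝ (fun q' => W2 k1 k2 k3 (gm (Function.uncurry d) q')) q (Pi.single j 1, 0) = _
  rw [fderiv_W2_gm k1 k2 k3 hd]
  rfl

end SolLayer

/-! ### Pointwise identity layer -/

section Star

variable (k1 k2 k3 : ℝ) (u d : (Fin 3 → ℝ) → ℝ → Fin 3 → ℝ) (Pf : (Fin 3 → ℝ) → ℝ → ℝ) (t : ℝ)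

/-- Wp composed with the solution, as spacetime field -/
def WpC (k j : Fin 3) : V3 × ℝ → ℝ :=
  fun q => WpF k1 k2 k3 k j (gm (Function.uncurry d) q)

/-- the flux field as a spacetime function -/
def VF (j : Fin 3) : V3 × ℝ → ℝ := fun q =>
  (∑ i, cF (Function.uncurry u) i q * DF (cF (Function.uncurry u) i) j q)
  - cF (Function.uncurry u) j q * (vnsq (Function.uncurry u q) / 2 + Function.uncurry Pf q
      + W2 k1 k2 k3 (gm (Function.uncurry d) q))
  - (∑ i, cF (Function.uncurry u) i q
      * ∑ k, DF (cF (Function.uncurry d) k) i q * WpC k1 k2 k3 d k j q)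
  + (∑ k, WpC k1 k2 k3 d k j q * (TF (cF (Function.uncurry d) k) q
      + ∑ i, cF (Function.uncurry u) i q * DF (cF (Function.uncurry d) k) i q))

/-- the flux vector field at fixed time `t` -/
def Vf (j : Fin 3) : V3 → ℝ := fun y => VF k1 k2 k3 u d Pf j (y, t)

variable {u d Pf}

lemma contDiff_WpC (hd : ContDiff ℝ (⊤ : ℕ∞) (Function.uncurry d)) (k j : Fin 3) :
    ContDiff ℝ (⊤ : ℕ∞) (WpC k1 k2 k3 d k j) :=
  (contDiff_WpF k1 k2 k3 k j).comp (contDiff_gm hd)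

lemma contDiff_VF (hu : ContDiff ℝ (⊤ : ℕ∞) (Function.uncurry u))
    (hd : ContDiff ℝ (⊤ : ℕ∞) (Function.uncurry d)) (hP : ContDiff ℝ (⊤ : ℕ∞) (Function.uncurry Pf))
    (j : Fin 3) : ContDiff ℝ (⊤ : ℕ∞) (VF k1 k2 k3 u d Pf j) := by
  have hcu : ∀ i, ContDiff ℝ (⊤ : ℕ∞) (cF (Function.uncurry u) i) := contDiff_cF hu
  have hcd : ∀ i, ContDiff ℝ (⊤ : ℕ∞) (cF (Function.uncurry d) i) := contDiff_cF hd
  have hDu : ∀ i j', ContDiff ℝ (⊤ : ℕ∞) (DF (cF (Function.uncurry u) i) j') :=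
    fun i j' => DF_contDiff (hcu i) j'
  have hDd : ∀ i j', ContDiff ℝ (⊤ : ℕ∞) (DF (cF (Function.uncurry d) i) j') :=
    fun i j' => DF_contDiff (hcd i) j'
  have hTd : ∀ i, ContDiff ℝ (⊤ : ℕ∞) (TF (cF (Function.uncurry d) i)) :=
    fun i => TF_contDiff (hcd i)
  have hWpC : ∀ k j', ContDiff ℝ (⊤ : ℕ∞) (WpC k1 k2 k3 d k j') := contDiff_WpC k1 k2 k3 hd
  have hW2g : ContDiff ℝ (⊤ : ℕ∞) (fun q => W2 k1 k2 k3 (gm (Function.uncurry d) q)) :=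
    (contDiff_W2 k1 k2 k3).comp (contDiff_gm hd)
  have hvn : ContDiff ℝ (⊤ : ℕ∞) (fun q => vnsq (Function.uncurry u q) / 2) := contDiff_vnsq_u hu
  unfold VF
  apply ContDiff.add
  apply ContDiff.sub
  apply ContDiff.sub
  · exact ContDiff.sum fun i _ => (hcu i).mul (hDu i j)
  · exact (hcu j).mul ((hvn.add hP).add hW2g)
  · exact ContDiff.sum fun i _ =>
      (hcu i).mul (ContDiff.sum fun k _ => (hDd k i).mul (hWpC k j))
  · exact ContDiff.sum fun k _ => (hWpC k j).mul
      ((hTd k).add (ContDiff.sum fun i _ => (hcu i).mul (hDd k i)))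

/-- spatial derivative of the kinetic density -/
lemma DF_half_vnsq (hu : ContDiff ℝ (⊤ : ℕ∞) (Function.uncurry u)) (j : Fin 3) (q : V3 × ℝ) :
    DF (fun q' => vnsq (Function.uncurry u q') / 2) j q
      = ∑ i, cF (Function.uncurry u) i q * DF (cF (Function.uncurry u) i) j q := by
  show fderiv ℝ (fun q' => vnsq (Function.uncurry u q') / 2) q (Pi.single j 1, 0) = _
  rw [fderiv_half_vnsq hu]
  rfl

lemma pdVf_expand (hu : ContDiff ℝ (⊤ : ℕ∞) (Function.uncurry u))
    (hd : ContDiff ℝ (⊤ : ℕ∞) (Function.uncurry d)) (hP : ContDiff ℝ (⊤ : ℕ∞) (Function.uncurry Pf))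
    (j : Fin 3) (x : V3) :
    pd (Vf k1 k2 k3 u d Pf t j) j x
      = (∑ i, (DF (cF (Function.uncurry u) i) j (x,t) * DF (cF (Function.uncurry u) i) j (x,t)
          + cF (Function.uncurry u) i (x,t) * DF (DF (cF (Function.uncurry u) i) j) j (x,t)))
        - (DF (cF (Function.uncurry u) j) j (x,t)
              * (vnsq (Function.uncurry u (x,t)) / 2 + Function.uncurry Pf (x,t)
                  + W2 k1 k2 k3 (gm (Function.uncurry d) (x,t)))
            + cF (Function.uncurry u) j (x,t)
              * ((∑ i, cF (Function.uncurry u) i (x,t) * DF (cF (Function.uncurry u) i) j (x,t))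
              + DF (Function.uncurry Pf) j (x,t)
              + DF (fun q => W2 k1 k2 k3 (gm (Function.uncurry d) q)) j (x,t)))
        - (∑ i, (DF (cF (Function.uncurry u) i) j (x,t)
              * (∑ k, DF (cF (Function.uncurry d) k) i (x,t) * WpC k1 k2 k3 d k j (x,t))
            + cF (Function.uncurry u) i (x,t)
              * (∑ k, (DF (DF (cF (Function.uncurry d) k) i) j (x,t)
                  * WpC k1 k2 k3 d k j (x,t)
                + DF (cF (Function.uncurry d) k) i (x,t) * DF (WpC k1 k2 k3 d k j) j (x,t)))))
        + (∑ k, (DF (WpC k1 k2 k3 d k j) j (x,t)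
              * (TF (cF (Function.uncurry d) k) (x,t)
                + ∑ i, cF (Function.uncurry u) i (x,t) * DF (cF (Function.uncurry d) k) i (x,t))
            + WpC k1 k2 k3 d k j (x,t) * (DF (TF (cF (Function.uncurry d) k)) j (x,t)
              + ∑ i, (DF (cF (Function.uncurry u) i) j (x,t)
                    * DF (cF (Function.uncurry d) k) i (x,t)
                  + cF (Function.uncurry u) i (x,t)
                    * DF (DF (cF (Function.uncurry d) k) i) j (x,t))))) := by
  have hcu : ∀ i, ContDiff ℝ (⊤ : ℕ∞) (cF (Function.uncurry u) i) := contDiff_cF hu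
  have hcd : ∀ i, ContDiff ℝ (⊤ : ℕ∞) (cF (Function.uncurry d) i) := contDiff_cF hd
  have hDu : ∀ i j', ContDiff ℝ (⊤ : ℕ∞) (DF (cF (Function.uncurry u) i) j') :=
    fun i j' => DF_contDiff (hcu i) j'
  have hDd : ∀ i j', ContDiff ℝ (⊤ : ℕ∞) (DF (cF (Function.uncurry d) i) j') :=
    fun i j' => DF_contDiff (hcd i) j'
  have hTd : ∀ i, ContDiff ℝ (⊤ : ℕ∞) (TF (cF (Function.uncurry d) i)) :=
    fun i => TF_contDiff (hcd i)
  have hWpCc : ∀ k j', ContDiff ℝ (⊤ : ℕ∞) (WpC k1 k2 k3 d k j') := contDiff_WpC k1 k2 k3 hd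
  have hW2g : ContDiff ℝ (⊤ : ℕ∞) (fun q => W2 k1 k2 k3 (gm (Function.uncurry d) q)) :=
    (contDiff_W2 k1 k2 k3).comp (contDiff_gm hd)
  have hvn : ContDiff ℝ (⊤ : ℕ∞) (fun q => vnsq (Function.uncurry u q) / 2) := contDiff_vnsq_u hu
  have ds : ∀ {f : V3 × ℝ → ℝ}, ContDiff ℝ (⊤ : ℕ∞) f → ∀ (y : V3),
      DifferentiableAt ℝ (fun y' => f (y', t)) y :=
    fun hf y => diffAt_partial_fst ((hf.differentiable (by simp)) _)
  have d1 : ∀ y, DifferentiableAt ℝ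
      (fun y' => ∑ i, cF (Function.uncurry u) i (y', t)
        * DF (cF (Function.uncurry u) i) j (y', t)) y :=
    fun y => DifferentiableAt.fun_sum fun i _ => ((ds (hcu i) y).mul (ds (hDu i j) y))
  have d2 : ∀ y, DifferentiableAt ℝ (fun y' => cF (Function.uncurry u) j (y', t)
      * (vnsq (Function.uncurry u (y', t)) / 2 + Function.uncurry Pf (y', t)
        + W2 k1 k2 k3 (gm (Function.uncurry d) (y', t)))) y :=
    fun y => (ds (hcu j) y).mul (((ds hvn y).add (ds hP y)).add (ds hW2g y))
  have d3 : ∀ y, DifferentiableAt ℝ (fun y' => ∑ i, cF (Function.uncurry u) i (y', t)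
      * ∑ k, DF (cF (Function.uncurry d) k) i (y', t) * WpC k1 k2 k3 d k j (y', t)) y :=
    fun y => DifferentiableAt.fun_sum fun i _ => (ds (hcu i) y).mul
      (DifferentiableAt.fun_sum fun k _ => (ds (hDd k i) y).mul (ds (hWpCc k j) y))
  have d4 : ∀ y, DifferentiableAt ℝ (fun y' => ∑ k, WpC k1 k2 k3 d k j (y', t)
      * (TF (cF (Function.uncurry d) k) (y', t)
        + ∑ i, cF (Function.uncurry u) i (y', t)
          * DF (cF (Function.uncurry d) k) i (y', t))) y :=
    fun y => DifferentiableAt.fun_sum fun k _ => (ds (hWpCc k j) y).mul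
      ((ds (hTd k) y).add (DifferentiableAt.fun_sum fun i _ => (ds (hcu i) y).mul (ds (hDd k i) y)))
  unfold Vf VF
  rw [pd_add (((d1 x).fun_sub (d2 x)).fun_sub (d3 x)) (d4 x) j,
      pd_sub ((d1 x).fun_sub (d2 x)) (d3 x) j,
      pd_sub (d1 x) (d2 x) j]
  congr 1
  · congr 1
    · congr 1
      · rw [pd_sum Finset.univ _ (fun i _ => (ds (hcu i) x).fun_mul (ds (hDu i j) x)) j]
        refine Finset.sum_congr rfl fun i _ => ?_
        rw [pd_mul (ds (hcu i) x) (ds (hDu i j) x) j,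
            pd_slice (hcu i) t j x, pd_slice (hDu i j) t j x]
        ring
      · rw [pd_mul (ds (hcu j) x) (((ds hvn x).fun_add (ds hP x)).fun_add (ds hW2g x)) j,
            pd_add ((ds hvn x).fun_add (ds hP x)) (ds hW2g x) j,
            pd_add (ds hvn x) (ds hP x) j,
            pd_slice (hcu j) t j x, pd_slice hvn t j x, pd_slice hP t j x,
            pd_slice hW2g t j x, DF_half_vnsq hu]
        ring
    · rw [pd_sum Finset.univ _ (fun i _ => (ds (hcu i) x).fun_mul
          (DifferentiableAt.fun_sum fun k _ => (ds (hDd k i) x).fun_mul (ds (hWpCc k j) x))) j]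
      refine Finset.sum_congr rfl fun i _ => ?_
      rw [pd_mul (ds (hcu i) x)
            (DifferentiableAt.fun_sum fun k _ => (ds (hDd k i) x).fun_mul (ds (hWpCc k j) x)) j,
          pd_sum Finset.univ _ (fun k _ => (ds (hDd k i) x).fun_mul (ds (hWpCc k j) x)) j,
          pd_slice (hcu i) t j x]
      have hk : ∀ k : Fin 3, pd (fun y => DF (cF (Function.uncurry d) k) i (y, t)
          * WpC k1 k2 k3 d k j (y, t)) j x
          = DF (DF (cF (Function.uncurry d) k) i) j (x,t) * WpC k1 k2 k3 d k j (x,t)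
            + DF (cF (Function.uncurry d) k) i (x,t) * DF (WpC k1 k2 k3 d k j) j (x,t) := by
        intro k
        rw [pd_mul (ds (hDd k i) x) (ds (hWpCc k j) x) j,
            pd_slice (hDd k i) t j x, pd_slice (hWpCc k j) t j x]
        ring
      rw [Finset.sum_congr rfl fun k _ => hk k]
      ring
  · rw [pd_sum Finset.univ _ (fun k _ => (ds (hWpCc k j) x).fun_mul
        ((ds (hTd k) x).fun_add (DifferentiableAt.fun_sum fun i _ =>
          (ds (hcu i) x).fun_mul (ds (hDd k i) x)))) j]
    refine Finset.sum_congr rfl fun k _ => ?_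
    rw [pd_mul (ds (hWpCc k j) x) ((ds (hTd k) x).fun_add (DifferentiableAt.fun_sum fun i _ =>
          (ds (hcu i) x).fun_mul (ds (hDd k i) x))) j,
        pd_add (ds (hTd k) x) (DifferentiableAt.fun_sum fun i _ =>
          (ds (hcu i) x).fun_mul (ds (hDd k i) x)) j,
        pd_slice (hWpCc k j) t j x, pd_slice (hTd k) t j x,
        pd_sum Finset.univ _ (fun i _ => (ds (hcu i) x).fun_mul (ds (hDd k i) x)) j]
    have hi : ∀ i : Fin 3, pd (fun y => cF (Function.uncurry u) i (y, t)
        * DF (cF (Function.uncurry d) k) i (y, t)) j x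
        = DF (cF (Function.uncurry u) i) j (x,t) * DF (cF (Function.uncurry d) k) i (x,t)
          + cF (Function.uncurry u) i (x,t) * DF (DF (cF (Function.uncurry d) k) i) j (x,t) := by
      intro i
      rw [pd_mul (ds (hcu i) x) (ds (hDd k i) x) j,
          pd_slice (hcu i) t j x, pd_slice (hDd k i) t j x]
      ring
    rw [Finset.sum_congr rfl fun i _ => hi i]
    ring

end Star

section Star2

variable (k1 k2 k3 : ℝ) {u d : (Fin 3 → ℝ) → ℝ → Fin 3 → ℝ} {Pf : (Fin 3 → ℝ) → ℝ → ℝ} (t : ℝ)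

lemma star_pointwise (hu : ContDiff ℝ (⊤ : ℕ∞) (Function.uncurry u))
    (hd : ContDiff ℝ (⊤ : ℕ∞) (Function.uncurry d)) (hP : ContDiff ℝ (⊤ : ℕ∞) (Function.uncurry Pf))
    (x : V3)
    (mom : ∀ i : Fin 3, TF (cF (Function.uncurry u) i) (x,t)
        + (∑ j, cF (Function.uncurry u) j (x,t) * DF (cF (Function.uncurry u) i) j (x,t))
        - (∑ j, DF (DF (cF (Function.uncurry u) i) j) j (x,t))
        + DF (Function.uncurry Pf) i (x,t)
      = -(∑ j, ∑ k, (DF (DF (cF (Function.uncurry d) k) i) j (x,t) * WpC k1 k2 k3 d k j (x,t)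
          + DF (cF (Function.uncurry d) k) i (x,t) * DF (WpC k1 k2 k3 d k j) j (x,t))))
    (dir : ∀ i : Fin 3, TF (cF (Function.uncurry d) i) (x,t)
        + (∑ j, cF (Function.uncurry u) j (x,t) * DF (cF (Function.uncurry d) i) j (x,t))
      = (∑ j, DF (WpC k1 k2 k3 d i j) j (x,t))
        - WzF k1 k2 k3 i (gm (Function.uncurry d) (x,t))
        - (∑ k, ((∑ j, DF (WpC k1 k2 k3 d k j) j (x,t))
              - WzF k1 k2 k3 k (gm (Function.uncurry d) (x,t))) * cF (Function.uncurry d) k (x,t))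
          * cF (Function.uncurry d) i (x,t))
    (hunit : ∑ i, cF (Function.uncurry d) i (x,t) ^ 2 = 1)
    (hdivf : ∑ i, DF (cF (Function.uncurry u) i) i (x,t) = 0) :
    TF (eF k1 k2 k3 u d) (x,t)
      = -((∑ i, ∑ j, DF (cF (Function.uncurry u) i) j (x,t) ^ 2)
          + ∑ i, (TF (cF (Function.uncurry d) i) (x,t)
              + ∑ j, cF (Function.uncurry u) j (x,t)
                * DF (cF (Function.uncurry d) i) j (x,t)) ^ 2)
        + ∑ j, pd (Vf k1 k2 k3 u d Pf t j) j x := by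
  have momS : ∀ i : Fin 3, TF (cF (Function.uncurry u) i) (x,t)
      = -(∑ j, cF (Function.uncurry u) j (x,t) * DF (cF (Function.uncurry u) i) j (x,t))
        + (∑ j, DF (DF (cF (Function.uncurry u) i) j) j (x,t))
        - DF (Function.uncurry Pf) i (x,t)
        - (∑ j, ∑ k, (DF (DF (cF (Function.uncurry d) k) i) j (x,t) * WpC k1 k2 k3 d k j (x,t)
          + DF (cF (Function.uncurry d) k) i (x,t) * DF (WpC k1 k2 k3 d k j) j (x,t))) := by
    intro i
    have := mom i
    linarith
  have dirS : ∀ i : Fin 3, TF (cF (Function.uncurry d) i) (x,t)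
      = -(∑ j, cF (Function.uncurry u) j (x,t) * DF (cF (Function.uncurry d) i) j (x,t))
        + ((∑ j, DF (WpC k1 k2 k3 d i j) j (x,t))
          - WzF k1 k2 k3 i (gm (Function.uncurry d) (x,t))
          - (∑ k, ((∑ j, DF (WpC k1 k2 k3 d k j) j (x,t))
                - WzF k1 k2 k3 k (gm (Function.uncurry d) (x,t)))
              * cF (Function.uncurry d) k (x,t))
            * cF (Function.uncurry d) i (x,t)) := by
    intro i
    have := dir i
    linarith
  have hvns : vnsq (Function.uncurry u (x,t)) = ∑ i, cF (Function.uncurry u) i (x,t) ^ 2 := rfl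
  have hcomm : ∀ i j : Fin 3, TF (DF (cF (Function.uncurry d) i) j) (x,t)
      = DF (TF (cF (Function.uncurry d) i)) j (x,t) :=
    fun i j => TF_DF_comm (contDiff_cF hd i) j (x,t)
  have hsym : ∀ (k a b : Fin 3), DF (DF (cF (Function.uncurry d) k) a) b (x,t)
      = DF (DF (cF (Function.uncurry d) k) b) a (x,t) :=
    fun k a b => DF_DF_comm (contDiff_cF hd k) a b (x,t)
  have hpd : (∑ j, pd (Vf k1 k2 k3 u d Pf t j) j x)
      = ∑ j, ((∑ i, (DF (cF (Function.uncurry u) i) j (x,t)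
            * DF (cF (Function.uncurry u) i) j (x,t)
          + cF (Function.uncurry u) i (x,t) * DF (DF (cF (Function.uncurry u) i) j) j (x,t)))
        - (DF (cF (Function.uncurry u) j) j (x,t)
              * (vnsq (Function.uncurry u (x,t)) / 2 + Function.uncurry Pf (x,t)
                  + W2 k1 k2 k3 (gm (Function.uncurry d) (x,t)))
            + cF (Function.uncurry u) j (x,t)
              * ((∑ i, cF (Function.uncurry u) i (x,t) * DF (cF (Function.uncurry u) i) j (x,t))
              + DF (Function.uncurry Pf) j (x,t)
              + DF (fun q => W2 k1 k2 k3 (gm (Function.uncurry d) q)) j (x,t)))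
        - (∑ i, (DF (cF (Function.uncurry u) i) j (x,t)
              * (∑ k, DF (cF (Function.uncurry d) k) i (x,t) * WpC k1 k2 k3 d k j (x,t))
            + cF (Function.uncurry u) i (x,t)
              * (∑ k, (DF (DF (cF (Function.uncurry d) k) i) j (x,t)
                  * WpC k1 k2 k3 d k j (x,t)
                + DF (cF (Function.uncurry d) k) i (x,t)
                  * DF (WpC k1 k2 k3 d k j) j (x,t)))))
        + (∑ k, (DF (WpC k1 k2 k3 d k j) j (x,t)
              * (TF (cF (Function.uncurry d) k) (x,t)
                + ∑ i, cF (Function.uncurry u) i (x,t) * DF (cF (Function.uncurry d) k) i (x,t))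
            + WpC k1 k2 k3 d k j (x,t) * (DF (TF (cF (Function.uncurry d) k)) j (x,t)
              + ∑ i, (DF (cF (Function.uncurry u) i) j (x,t)
                    * DF (cF (Function.uncurry d) k) i (x,t)
                  + cF (Function.uncurry u) i (x,t)
                    * DF (DF (cF (Function.uncurry d) k) i) j (x,t)))))) :=
    Finset.sum_congr rfl fun j _ => pdVf_expand k1 k2 k3 t hu hd hP j x
  have hDW : ∀ j : Fin 3, DF (fun q => W2 k1 k2 k3 (gm (Function.uncurry d) q)) j (x,t)
      = (∑ i, DF (cF (Function.uncurry d) i) j (x,t)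
            * WzF k1 k2 k3 i (gm (Function.uncurry d) (x,t)))
        + ∑ i, ∑ k, DF (DF (cF (Function.uncurry d) i) k) j (x,t)
            * WpF k1 k2 k3 i k (gm (Function.uncurry d) (x,t)) :=
    fun j => DF_W2_gm k1 k2 k3 hd j (x,t)
  have hWpW : ∀ i k : Fin 3, WpF k1 k2 k3 i k (gm (Function.uncurry d) (x,t))
      = WpC k1 k2 k3 d i k (x,t) := fun i k => rfl
  rw [TF_eF k1 k2 k3 hu hd (x,t), hpd]
  simp only [hDW, hWpW, hcomm, hvns]
  simp only [Fin.sum_univ_three] at momS dirS hunit hdivf ⊢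
  rw [momS 0, momS 1, momS 2, dirS 0, dirS 1, dirS 2]
  rw [hsym 0 1 0, hsym 0 2 0, hsym 0 2 1, hsym 1 1 0, hsym 1 2 0, hsym 1 2 1,
      hsym 2 1 0, hsym 2 2 0, hsym 2 2 1]
  linear_combination
    ((cF (Function.uncurry u) 0 (x,t) ^ 2 + cF (Function.uncurry u) 1 (x,t) ^ 2
        + cF (Function.uncurry u) 2 (x,t) ^ 2) / 2 + Function.uncurry Pf (x,t)
      + W2 k1 k2 k3 (gm (Function.uncurry d) (x,t))) * hdivf
    + (((DF (WpC k1 k2 k3 d 0 0) 0 (x,t) + DF (WpC k1 k2 k3 d 0 1) 1 (x,t)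
          + DF (WpC k1 k2 k3 d 0 2) 2 (x,t)
          - WzF k1 k2 k3 0 (gm (Function.uncurry d) (x,t))) * cF (Function.uncurry d) 0 (x,t)
      + (DF (WpC k1 k2 k3 d 1 0) 0 (x,t) + DF (WpC k1 k2 k3 d 1 1) 1 (x,t)
          + DF (WpC k1 k2 k3 d 1 2) 2 (x,t)
          - WzF k1 k2 k3 1 (gm (Function.uncurry d) (x,t))) * cF (Function.uncurry d) 1 (x,t)
      + (DF (WpC k1 k2 k3 d 2 0) 0 (x,t) + DF (WpC k1 k2 k3 d 2 1) 1 (x,t)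
          + DF (WpC k1 k2 k3 d 2 2) 2 (x,t)
          - WzF k1 k2 k3 2 (gm (Function.uncurry d) (x,t))) * cF (Function.uncurry d) 2 (x,t)) ^ 2)
      * hunit

end Star2

section Convert

variable (k1 k2 k3 : ℝ) {u d : (Fin 3 → ℝ) → ℝ → Fin 3 → ℝ} {Pf : (Fin 3 → ℝ) → ℝ → ℝ} (t : ℝ)

lemma convert_mom (hu : ContDiff ℝ (⊤ : ℕ∞) (Function.uncurry u))
    (hd : ContDiff ℝ (⊤ : ℕ∞) (Function.uncurry d)) (hP : ContDiff ℝ (⊤ : ℕ∞) (Function.uncurry Pf))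
    (x : V3) (i : Fin 3)
    (hm : deriv (fun s => u x s i) t + (∑ j, u x t j * pd (fun y => u y t i) j x)
        - (∑ j, pd (pd (fun y => u y t i) j) j x) + pd (fun y => Pf y t) i x
      = -(∑ j, pd (fun y => ∑ k, pd (fun y' => d y' t k) i y
            * Wp k1 k2 k3 (d y t) (jac (fun y' => d y' t) y) k j) j x)) :
    TF (cF (Function.uncurry u) i) (x,t)
        + (∑ j, cF (Function.uncurry u) j (x,t) * DF (cF (Function.uncurry u) i) j (x,t))
        - (∑ j, DF (DF (cF (Function.uncurry u) i) j) j (x,t))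
        + DF (Function.uncurry Pf) i (x,t)
      = -(∑ j, ∑ k, (DF (DF (cF (Function.uncurry d) k) i) j (x,t) * WpC k1 k2 k3 d k j (x,t)
          + DF (cF (Function.uncurry d) k) i (x,t) * DF (WpC k1 k2 k3 d k j) j (x,t))) := by
  have ds : ∀ {f : V3 × ℝ → ℝ}, ContDiff ℝ (⊤ : ℕ∞) f → ∀ (y : V3),
      DifferentiableAt ℝ (fun y' => f (y', t)) y :=
    fun hf y => diffAt_partial_fst ((hf.differentiable (by simp)) _)
  have e1 : deriv (fun s => u x s i) t = TF (cF (Function.uncurry u) i) (x,t) :=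
    deriv_slice (contDiff_cF hu i) x t
  have e2 : ∀ j : Fin 3, pd (fun y => u y t i) j x = DF (cF (Function.uncurry u) i) j (x,t) :=
    fun j => pd_slice (contDiff_cF hu i) t j x
  have e3 : ∀ j : Fin 3, pd (pd (fun y => u y t i) j) j x
      = DF (DF (cF (Function.uncurry u) i) j) j (x,t) := by
    intro j
    have hfn : pd (fun y => u y t i) j = fun y => DF (cF (Function.uncurry u) i) j (y,t) :=
      funext fun y => pd_slice (contDiff_cF hu i) t j y
    rw [hfn]
    exact pd_slice (DF_contDiff (contDiff_cF hu i) j) t j x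
  have e4 : pd (fun y => Pf y t) i x = DF (Function.uncurry Pf) i (x,t) := pd_slice hP t i x
  have e5 : ∀ (k : Fin 3) (y : V3), pd (fun y' => d y' t k) i y
      = DF (cF (Function.uncurry d) k) i (y, t) :=
    fun k y => pd_slice (contDiff_cF hd k) t i y
  have e6 : ∀ (y : V3) (k j : Fin 3),
      Wp k1 k2 k3 (d y t) (jac (fun y' => d y' t) y) k j = WpC k1 k2 k3 d k j (y,t) :=
    fun y k j => Wp_bridge k1 k2 k3 hd t y k j
  rw [e1, e4] at hm
  simp only [e2, e3, e5, e6] at hm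
  have e7 : ∀ j : Fin 3, pd (fun y => ∑ k, DF (cF (Function.uncurry d) k) i (y, t)
      * WpC k1 k2 k3 d k j (y, t)) j x
      = ∑ k, (DF (DF (cF (Function.uncurry d) k) i) j (x,t) * WpC k1 k2 k3 d k j (x,t)
          + DF (cF (Function.uncurry d) k) i (x,t) * DF (WpC k1 k2 k3 d k j) j (x,t)) := by
    intro j
    rw [pd_sum Finset.univ _ (fun k _ => (ds (DF_contDiff (contDiff_cF hd k) i) x).fun_mul
        (ds (contDiff_WpC k1 k2 k3 hd k j) x)) j]
    refine Finset.sum_congr rfl fun k _ => ?_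
    rw [pd_mul (ds (DF_contDiff (contDiff_cF hd k) i) x) (ds (contDiff_WpC k1 k2 k3 hd k j) x) j,
        pd_slice (DF_contDiff (contDiff_cF hd k) i) t j x,
        pd_slice (contDiff_WpC k1 k2 k3 hd k j) t j x]
    ring
  simp only [e7] at hm
  exact hm

lemma convert_dir (hu : ContDiff ℝ (⊤ : ℕ∞) (Function.uncurry u))
    (hd : ContDiff ℝ (⊤ : ℕ∞) (Function.uncurry d))
    (x : V3) (i : Fin 3)
    (hm : deriv (fun s => d x s i) t + (∑ j, u x t j * pd (fun y => d y t i) j x)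
      = (∑ j, pd (fun y => Wp k1 k2 k3 (d y t) (jac (fun y' => d y' t) y) i j) j x)
          - Wz k1 k2 k3 (d x t) (jac (fun y' => d y' t) x) i
          - (∑ k, ((∑ j, pd (fun y =>
                Wp k1 k2 k3 (d y t) (jac (fun y' => d y' t) y) k j) j x)
              - Wz k1 k2 k3 (d x t) (jac (fun y' => d y' t) x) k) * d x t k) * d x t i) :
    TF (cF (Function.uncurry d) i) (x,t)
        + (∑ j, cF (Function.uncurry u) j (x,t) * DF (cF (Function.uncurry d) i) j (x,t))
      = (∑ j, DF (WpC k1 k2 k3 d i j) j (x,t))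
        - WzF k1 k2 k3 i (gm (Function.uncurry d) (x,t))
        - (∑ k, ((∑ j, DF (WpC k1 k2 k3 d k j) j (x,t))
              - WzF k1 k2 k3 k (gm (Function.uncurry d) (x,t))) * cF (Function.uncurry d) k (x,t))
          * cF (Function.uncurry d) i (x,t) := by
  have e1 : deriv (fun s => d x s i) t = TF (cF (Function.uncurry d) i) (x,t) :=
    deriv_slice (contDiff_cF hd i) x t
  have e2 : ∀ j : Fin 3, pd (fun y => d y t i) j x = DF (cF (Function.uncurry d) i) j (x,t) :=
    fun j => pd_slice (contDiff_cF hd i) t j x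
  have e6 : ∀ (y : V3) (k j : Fin 3),
      Wp k1 k2 k3 (d y t) (jac (fun y' => d y' t) y) k j = WpC k1 k2 k3 d k j (y,t) :=
    fun y k j => Wp_bridge k1 k2 k3 hd t y k j
  have e8 : ∀ k : Fin 3, Wz k1 k2 k3 (d x t) (jac (fun y' => d y' t) x) k
      = WzF k1 k2 k3 k (gm (Function.uncurry d) (x,t)) :=
    fun k => Wz_bridge k1 k2 k3 hd t x k
  have e9 : ∀ (k j : Fin 3), pd (fun y => WpC k1 k2 k3 d k j (y, t)) j x
      = DF (WpC k1 k2 k3 d k j) j (x,t) :=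
    fun k j => pd_slice (contDiff_WpC k1 k2 k3 hd k j) t j x
  rw [e1] at hm
  simp only [e2, e6, e8, e9] at hm
  exact hm

lemma convert_unit (x : V3) (h : (∑ i, (d x t i) ^ 2) = 1) :
    ∑ i, cF (Function.uncurry d) i (x,t) ^ 2 = 1 := h

lemma convert_divf (hu : ContDiff ℝ (⊤ : ℕ∞) (Function.uncurry u)) (x : V3)
    (h : (∑ i, pd (fun y => u y t i) i x) = 0) :
    ∑ i, DF (cF (Function.uncurry u) i) i (x,t) = 0 := by
  have e2 : ∀ i : Fin 3, pd (fun y => u y t i) i x = DF (cF (Function.uncurry u) i) i (x,t) :=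
    fun i => pd_slice (contDiff_cF hu i) t i x
  simp only [e2] at h
  exact h

end Convert

section Anal

lemma contDiff_slice {f : V3 × ℝ → ℝ} (hf : ContDiff ℝ (⊤ : ℕ∞) f) (t : ℝ) :
    ContDiff ℝ (⊤ : ℕ∞) (fun y => f (y, t)) :=
  hf.comp (contDiff_id.prodMk contDiff_const)

/-- divergence lemma: integral of a partial derivative of a compactly supported
smooth function vanishes -/
lemma integral_pd_eq_zero {f : V3 → ℝ} (hf : ContDiff ℝ (⊤ : ℕ∞) f) (hsupp : HasCompactSupport f)
    (j : Fin 3) : ∫ x, pd f j x = 0 := by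
  have hfd : Differentiable ℝ f := hf.differentiable (by simp)
  have hg : Differentiable ℝ (fun _ : V3 => (1:ℝ)) := differentiable_const 1
  have hcont : Continuous (fun x => fderiv ℝ f x (Pi.single j 1)) :=
    (contDiff_fderiv_apply hf (Pi.single j 1)).continuous
  have h1 : HasCompactSupport (fderiv ℝ f) := hsupp.fderiv (𝕜 := ℝ)
  have hsupp' : HasCompactSupport (fun x => fderiv ℝ f x (Pi.single j 1)) :=
    h1.comp_left (g := fun L : V3 →L[ℝ] ℝ => L (Pi.single j 1)) (by simp)
  have hint : Integrable (fun x => fderiv ℝ f x (Pi.single j 1)) :=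
    hcont.integrable_of_hasCompactSupport hsupp'
  have h := integral_mul_fderiv_eq_neg_fderiv_mul_of_integrable
    (μ := volume) (f := f) (g := fun _ : V3 => (1:ℝ)) (v := Pi.single j 1)
    (by simpa using hint) (by simp) (by simpa using hf.continuous.integrable_of_hasCompactSupport hsupp)
    (fun x _ => hfd x) (fun x _ => hg x)
  simp only [fderiv_const_apply, Pi.zero_apply, ContinuousLinearMap.zero_apply, mul_zero, mul_one,
    integral_zero] at h
  unfold pd
  linarith [h]

end Anal

section ZeroLemmas

lemma OFW_zero (k1 k2 k3 : ℝ) (z : V3) : OFW k1 k2 k3 z 0 = 0 := by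
  unfold OFW cMat crossV
  norm_num [Fin.sum_univ_three, Matrix.cons_val_two, Matrix.head_cons, Matrix.tail_cons]

lemma vnsq_zero : vnsq 0 = 0 := by simp [vnsq]

end ZeroLemmas

/-- Basic energy balance law: for a classical solution `(u,d,P)` of the Ericksen–Leslie system
on `ℝ³ × [0,T)` and `t ∈ (0,T)`, the energy `∫ (|u|²/2 + W(d,∇d)) dx` is differentiable in
time with `d/dt ∫ (|u|²/2 + W(d,∇d)) dx + ∫ (|∇u|² + |∂ₜd + (u·∇)d|²) dx = 0`. -/
theorem basic_energy_balance_law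
    (k1 k2 k3 : ℝ) (hk1 : 0 < k1) (hk2 : 0 < k2) (hk3 : 0 < k3)
    (T : ℝ≥0∞) (hT : 0 < T)
    (u d : (Fin 3 → ℝ) → ℝ → Fin 3 → ℝ) (P : (Fin 3 → ℝ) → ℝ → ℝ)
    (hsol : IsClassicalSolutionEL k1 k2 k3 T u d P)
    (t : ℝ) (ht0 : 0 < t) (htT : ENNReal.ofReal t < T) :
    HasDerivAt
      (fun s => ∫ x, (vnsq (u x s) / 2 + OFW k1 k2 k3 (d x s) (jac (fun y => d y s) x)))
      (-(∫ x, (nsq1 (fun y => u y t) x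
          + ∑ i, (deriv (fun s => d x s i) t
              + ∑ j, u x t j * pd (fun y => d y t i) j x) ^ 2))) t := by
  obtain ⟨hu, hd, hP, hmom, hdivf, hunitd, hdir, hfar⟩ := hsol
  obtain ⟨dstar, hds, R, hRpos, hfar⟩ := hfar
  -- time window
  obtain ⟨ε, hε, hballJ⟩ : ∃ ε > 0, ∀ s ∈ Metric.ball t ε, 0 < s ∧ ENNReal.ofReal s < T := by
    rcases eq_or_ne T ⊤ with hT' | hT'
    · refine ⟨t, ht0, fun s hs => ⟨?_, ?_⟩⟩
      · have := Metric.mem_ball.1 hs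
        rw [Real.dist_eq] at this
        cases' abs_lt.1 this with h1 h2
        linarith
      · rw [hT']; exact ENNReal.ofReal_lt_top
    · have htR : t < T.toReal := by
        rw [← ENNReal.ofReal_lt_iff_lt_toReal ht0.le hT'] at *
        exact htT
      refine ⟨min t ((T.toReal - t)/2), lt_min ht0 (by linarith), fun s hs => ⟨?_, ?_⟩⟩
      · have := Metric.mem_ball.1 hs
        rw [Real.dist_eq] at this
        have h2 := abs_lt.1 this
        have := min_le_left t ((T.toReal - t)/2)
        linarith [h2.1]
      · have := Metric.mem_ball.1 hs
        rw [Real.dist_eq] at this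
        have h2 := abs_lt.1 this
        have h3 := min_le_right t ((T.toReal - t)/2)
        have hs' : s < T.toReal := by linarith [h2.2]
        have hs0 : 0 < s := by
          have := min_le_left t ((T.toReal - t)/2); linarith [h2.1]
        rw [ENNReal.ofReal_lt_iff_lt_toReal hs0.le hT']
        exact hs'
  have htball : t ∈ Metric.ball t ε := Metric.mem_ball_self hε
  -- the far region
  set Ω : Set V3 := {y : V3 | R^2 < ∑ i, y i^2} with hΩdef
  have hΩopen : IsOpen Ω := by
    apply isOpen_lt continuous_const
    exact continuous_finset_sum _ fun i _ => (continuous_apply i).pow 2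
  have hmemΩ : ∀ y : V3, y ∉ Metric.closedBall (0:V3) R → y ∈ Ω := by
    intro y hy
    by_contra hyΩ
    apply hy
    rw [Metric.mem_closedBall, dist_zero_right]
    have hsum : ∑ i, y i ^ 2 ≤ R^2 := le_of_not_gt hyΩ
    apply pi_norm_le_iff_of_nonneg hRpos.le |>.2
    intro i
    rw [Real.norm_eq_abs, ← Real.sqrt_sq_eq_abs]
    rw [show R = Real.sqrt (R^2) from (Real.sqrt_sq hRpos.le).symm]
    apply Real.sqrt_le_sqrt
    calc y i ^ 2 ≤ ∑ i', y i' ^ 2 :=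
          Finset.single_le_sum (f := fun i' => y i' ^ 2) (fun i' _ => sq_nonneg _)
            (Finset.mem_univ i)
      _ ≤ R ^ 2 := hsum
  have hfar' : ∀ y ∈ Ω, ∀ s ∈ Metric.ball t ε, u y s = 0 ∧ d y s = dstar := by
    intro y hy s hs
    exact hfar y s (hballJ s hs).1.le (hballJ s hs).2 hy
  -- eventually-constant germs on the far open set
  have hopenP : IsOpen (Ω ×ˢ Metric.ball t ε) := hΩopen.prod Metric.isOpen_ball
  have hUD : ∀ q ∈ Ω ×ˢ Metric.ball t ε,
      (Function.uncurry d) =ᶠ[nhds q] (fun _ => dstar) := by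
    intro q hq
    exact Filter.eventuallyEq_of_mem (hopenP.mem_nhds hq)
      (fun p hp => (hfar' p.1 hp.1 p.2 hp.2).2)
  have hU0 : ∀ q ∈ Ω ×ˢ Metric.ball t ε,
      (Function.uncurry u) =ᶠ[nhds q] (fun _ => (0 : Fin 3 → ℝ)) := by
    intro q hq
    exact Filter.eventuallyEq_of_mem (hopenP.mem_nhds hq)
      (fun p hp => (hfar' p.1 hp.1 p.2 hp.2).1)
  have hJF0 : ∀ q ∈ Ω ×ˢ Metric.ball t ε, JF (Function.uncurry d) q = 0 := by
    intro q hq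
    funext i j
    show fderiv ℝ (cF (Function.uncurry d) i) q (Pi.single j 1, 0) = (0 : M3) i j
    have hev : (cF (Function.uncurry d) i) =ᶠ[nhds q] (fun _ => dstar i) :=
      (hUD q hq).mono fun p hp => congrFun hp i
    rw [hev.fderiv_eq, fderiv_const_apply]
    simp
  have heF0 : ∀ q ∈ Ω ×ˢ Metric.ball t ε, eF k1 k2 k3 u d q = 0 := by
    intro q hq
    show vnsq (Function.uncurry u q) / 2
        + W2 k1 k2 k3 (gm (Function.uncurry d) q) = 0
    have h1 : Function.uncurry u q = 0 := (hfar' q.1 hq.1 q.2 hq.2).1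
    have h2 : gm (Function.uncurry d) q = (dstar, 0) := by
      show (Function.uncurry d q, JF (Function.uncurry d) q) = _
      rw [hJF0 q hq]
      exact congrArg (fun z => (z, (0:M3))) ((hfar' q.1 hq.1 q.2 hq.2).2)
    rw [h1, h2, vnsq_zero]
    show 0 / 2 + OFW k1 k2 k3 dstar 0 = 0
    rw [OFW_zero]
    norm_num
  have hTF0 : ∀ q ∈ Ω ×ˢ Metric.ball t ε, TF (eF k1 k2 k3 u d) q = 0 := by
    intro q hq
    have hev : (eF k1 k2 k3 u d) =ᶠ[nhds q] (fun _ => (0:ℝ)) :=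
      Filter.eventuallyEq_of_mem (hopenP.mem_nhds hq) (fun p hp => heF0 p hp)
    show fderiv ℝ (eF k1 k2 k3 u d) q (0, 1) = 0
    rw [hev.fderiv_eq, fderiv_const_apply]
    simp
  -- smoothness of the energy density
  have heFs : ContDiff ℝ (⊤ : ℕ∞) (eF k1 k2 k3 u d) := contDiff_eF k1 k2 k3 hu hd
  have hTFc : Continuous (TF (eF k1 k2 k3 u d)) := (TF_contDiff heFs).continuous
  -- dominated differentiation under the integral
  have hKcomp : IsCompact (Metric.closedBall (0:V3) R ×ˢ Set.Icc (t-ε) (t+ε)) :=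
    (isCompact_closedBall _ _).prod isCompact_Icc
  obtain ⟨C, hC⟩ := hKcomp.exists_bound_of_continuousOn hTFc.continuousOn
  have hboundInt : Integrable ((Metric.closedBall (0:V3) R).indicator (fun _ => C)) := by
    rw [integrable_indicator_iff measurableSet_closedBall]
    exact integrableOn_const measure_closedBall_lt_top.ne
  have hslicecont : ∀ s : ℝ, Continuous (fun x => eF k1 k2 k3 u d (x, s)) :=
    fun s => heFs.continuous.comp (continuous_id.prodMk continuous_const)
  have hmeas : ∀ᶠ s in nhds t,
      AEStronglyMeasurable (fun x => eF k1 k2 k3 u d (x, s)) volume :=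
    Filter.Eventually.of_forall fun s => (hslicecont s).aestronglyMeasurable
  have hFint : Integrable (fun x => eF k1 k2 k3 u d (x, t)) := by
    apply Continuous.integrable_of_hasCompactSupport (hslicecont t)
    apply HasCompactSupport.intro (isCompact_closedBall (0:V3) R)
    intro y hy
    exact heF0 (y, t) ⟨hmemΩ y hy, htball⟩
  have hF'meas : AEStronglyMeasurable (fun x => TF (eF k1 k2 k3 u d) (x, t)) volume :=
    (hTFc.comp (continuous_id.prodMk continuous_const)).aestronglyMeasurable
  have hbound : ∀ᵐ x : V3, ∀ s ∈ Metric.ball t ε, ‖TF (eF k1 k2 k3 u d) (x, s)‖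
      ≤ (Metric.closedBall (0:V3) R).indicator (fun _ => C) x := by
    apply Filter.Eventually.of_forall
    intro x s hs
    by_cases hx : x ∈ Metric.closedBall (0:V3) R
    · rw [Set.indicator_of_mem hx]
      apply hC
      refine ⟨hx, ?_⟩
      have := Metric.mem_ball.1 hs
      rw [Real.dist_eq] at this
      have h2 := abs_lt.1 this
      exact ⟨by linarith [h2.1], by linarith [h2.2]⟩
    · rw [Set.indicator_of_notMem hx, hTF0 (x, s) ⟨hmemΩ x hx, hs⟩]
      simp
  have hdiff : ∀ᵐ x : V3, ∀ s ∈ Metric.ball t ε,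
      HasDerivAt (fun s' => eF k1 k2 k3 u d (x, s')) (TF (eF k1 k2 k3 u d) (x, s)) s :=
    Filter.Eventually.of_forall fun x s _ => hasDerivAt_slice heFs x s
  have hkey : HasDerivAt (fun s => ∫ x, eF k1 k2 k3 u d (x, s))
      (∫ x, TF (eF k1 k2 k3 u d) (x, t)) t :=
    (hasDerivAt_integral_of_dominated_loc_of_deriv_le (Metric.ball_mem_nhds t hε) hmeas hFint hF'meas hbound
      hboundInt hdiff).2
  -- rewrite the target function
  have hfun : (fun s => ∫ x, (vnsq (u x s) / 2
        + OFW k1 k2 k3 (d x s) (jac (fun y => d y s) x)))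
      = (fun s => ∫ x, eF k1 k2 k3 u d (x, s)) := by
    funext s
    simp only [eF_bridge k1 k2 k3 hd]
  rw [hfun]
  -- it remains to identify the value of the derivative
  suffices hval : ∫ x, TF (eF k1 k2 k3 u d) (x, t)
      = -(∫ x, (nsq1 (fun y => u y t) x
          + ∑ i, (deriv (fun s => d x s i) t
              + ∑ j, u x t j * pd (fun y => d y t i) j x) ^ 2)) by
    rw [hval] at hkey
    exact hkey
  -- atomic forms of the PDE hypotheses
  have hmomA := fun (x : V3) (i : Fin 3) =>
    convert_mom k1 k2 k3 t hu hd hP x i (hmom x t ht0.le htT i)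
  have hdirA := fun (x : V3) (i : Fin 3) =>
    convert_dir k1 k2 k3 t hu hd x i (hdir x t ht0.le htT i)
  have hunitA := fun (x : V3) => convert_unit t x (hunitd x t ht0.le htT)
  have hdivA := fun (x : V3) => convert_divf t hu x (hdivf x t ht0.le htT)
  have hstar := fun (x : V3) =>
    star_pointwise k1 k2 k3 t hu hd hP x (hmomA x) (hdirA x) (hunitA x) (hdivA x)
  -- the claimed integrand in atomic form
  have hIG : ∀ x : V3, (nsq1 (fun y => u y t) x
      + ∑ i, (deriv (fun s => d x s i) t
          + ∑ j, u x t j * pd (fun y => d y t i) j x) ^ 2)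
      = (∑ i, ∑ j, DF (cF (Function.uncurry u) i) j (x,t) ^ 2)
        + ∑ i, (TF (cF (Function.uncurry d) i) (x,t)
            + ∑ j, cF (Function.uncurry u) j (x,t)
              * DF (cF (Function.uncurry d) i) j (x,t)) ^ 2 := by
    intro x
    have a1 : ∀ i j : Fin 3, pd (fun y => u y t i) j x
        = DF (cF (Function.uncurry u) i) j (x,t) :=
      fun i j => pd_slice (contDiff_cF hu i) t j x
    have a2 : ∀ i : Fin 3, deriv (fun s => d x s i) t = TF (cF (Function.uncurry d) i) (x,t) :=
      fun i => deriv_slice (contDiff_cF hd i) x t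
    have a3 : ∀ i j : Fin 3, pd (fun y => d y t i) j x
        = DF (cF (Function.uncurry d) i) j (x,t) :=
      fun i j => pd_slice (contDiff_cF hd i) t j x
    unfold nsq1
    simp only [a1, a2, a3]
    rfl
  -- vanishing of the atomic integrand on the far region
  have hA0 : ∀ x ∈ Ω, (∑ i, ∑ j, DF (cF (Function.uncurry u) i) j (x,t) ^ 2)
      + ∑ i, (TF (cF (Function.uncurry d) i) (x,t)
          + ∑ j, cF (Function.uncurry u) j (x,t)
            * DF (cF (Function.uncurry d) i) j (x,t)) ^ 2 = 0 := by
    intro x hx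
    have hq : (x,t) ∈ Ω ×ˢ Metric.ball t ε := ⟨hx, htball⟩
    have hDu0 : ∀ i j : Fin 3, DF (cF (Function.uncurry u) i) j (x,t) = 0 := by
      intro i j
      show fderiv ℝ (cF (Function.uncurry u) i) (x,t) _ = 0
      have hev : (cF (Function.uncurry u) i) =ᶠ[nhds (x,t)] (fun _ => (0:ℝ)) :=
        (hU0 _ hq).mono fun p hp => by
          show Function.uncurry u p i = 0
          rw [show Function.uncurry u p = 0 from hp]
          rfl
      rw [hev.fderiv_eq, fderiv_const_apply]
      simp
    have hTd0 : ∀ i : Fin 3, TF (cF (Function.uncurry d) i) (x,t) = 0 := by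
      intro i
      show fderiv ℝ (cF (Function.uncurry d) i) (x,t) _ = 0
      have hev : (cF (Function.uncurry d) i) =ᶠ[nhds (x,t)] (fun _ => dstar i) :=
        (hUD _ hq).mono fun p hp => congrFun hp i
      rw [hev.fderiv_eq, fderiv_const_apply]
      simp
    have hu0 : ∀ j : Fin 3, cF (Function.uncurry u) j (x,t) = 0 := by
      intro j
      show u x t j = 0
      rw [(hfar' x hx t htball).1]
      rfl
    simp [hDu0, hTd0, hu0]
  -- vanishing of the flux field on the far region
  have hVF0 : ∀ j : Fin 3, ∀ q ∈ Ω ×ˢ Metric.ball t ε, VF k1 k2 k3 u d P j q = 0 := by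
    intro j q hq
    have hu0 : ∀ i : Fin 3, cF (Function.uncurry u) i q = 0 := by
      intro i
      show u q.1 q.2 i = 0
      rw [(hfar' q.1 hq.1 q.2 hq.2).1]
      rfl
    have hTd0 : ∀ k : Fin 3, TF (cF (Function.uncurry d) k) q = 0 := by
      intro k
      show fderiv ℝ (cF (Function.uncurry d) k) q _ = 0
      have hev : (cF (Function.uncurry d) k) =ᶠ[nhds q] (fun _ => dstar k) :=
        (hUD _ hq).mono fun p hp => congrFun hp k
      rw [hev.fderiv_eq, fderiv_const_apply]
      simp
    unfold VF
    simp [hu0, hTd0]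
  have hVfsmooth : ∀ j : Fin 3, ContDiff ℝ (⊤ : ℕ∞) (Vf k1 k2 k3 u d P t j) :=
    fun j => contDiff_slice (contDiff_VF k1 k2 k3 hu hd hP j) t
  have hVfsupp : ∀ j : Fin 3, HasCompactSupport (Vf k1 k2 k3 u d P t j) := by
    intro j
    apply HasCompactSupport.intro (isCompact_closedBall (0:V3) R)
    intro y hy
    exact hVF0 j (y,t) ⟨hmemΩ y hy, htball⟩
  have hpdVf0 : ∀ j : Fin 3, ∫ x, pd (Vf k1 k2 k3 u d P t j) j x = 0 :=
    fun j => integral_pd_eq_zero (hVfsmooth j) (hVfsupp j) j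
  -- continuity of the atomic integrand
  have c1 : ∀ i j : Fin 3, Continuous (fun x : V3 => DF (cF (Function.uncurry u) i) j (x,t)) :=
    fun i j => ((DF_contDiff (contDiff_cF hu i) j).continuous).comp
      (continuous_id.prodMk continuous_const)
  have c2 : ∀ i : Fin 3, Continuous (fun x : V3 => TF (cF (Function.uncurry d) i) (x,t)) :=
    fun i => ((TF_contDiff (contDiff_cF hd i)).continuous).comp
      (continuous_id.prodMk continuous_const)
  have c3 : ∀ j : Fin 3, Continuous (fun x : V3 => cF (Function.uncurry u) j (x,t)) :=
    fun j => ((contDiff_cF hu j).continuous).comp (continuous_id.prodMk continuous_const)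
  have c4 : ∀ i j : Fin 3, Continuous (fun x : V3 => DF (cF (Function.uncurry d) i) j (x,t)) :=
    fun i j => ((DF_contDiff (contDiff_cF hd i) j).continuous).comp
      (continuous_id.prodMk continuous_const)
  have hIGint : Integrable (fun x => nsq1 (fun y => u y t) x
      + ∑ i, (deriv (fun s => d x s i) t
          + ∑ j, u x t j * pd (fun y => d y t i) j x) ^ 2) := by
    have heq : (fun x => nsq1 (fun y => u y t) x
        + ∑ i, (deriv (fun s => d x s i) t
            + ∑ j, u x t j * pd (fun y => d y t i) j x) ^ 2)
        = fun x => (∑ i, ∑ j, DF (cF (Function.uncurry u) i) j (x,t) ^ 2)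
          + ∑ i, (TF (cF (Function.uncurry d) i) (x,t)
              + ∑ j, cF (Function.uncurry u) j (x,t)
                * DF (cF (Function.uncurry d) i) j (x,t)) ^ 2 := funext hIG
    rw [heq]
    apply Continuous.integrable_of_hasCompactSupport
    · apply Continuous.add
      · exact continuous_finset_sum _ fun i _ => continuous_finset_sum _ fun j _ =>
          (c1 i j).pow 2
      · exact continuous_finset_sum _ fun i _ => ((c2 i).add
          (continuous_finset_sum _ fun j _ => (c3 j).mul (c4 i j))).pow 2
    · apply HasCompactSupport.intro (isCompact_closedBall (0:V3) R)
      intro y hy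
      exact hA0 y (hmemΩ y hy)
  have hpdint : ∀ j : Fin 3, Integrable (fun x => pd (Vf k1 k2 k3 u d P t j) j x) := by
    intro j
    have heq : (fun x => pd (Vf k1 k2 k3 u d P t j) j x)
        = fun x => DF (VF k1 k2 k3 u d P j) j (x,t) :=
      funext fun x => pd_slice (contDiff_VF k1 k2 k3 hu hd hP j) t j x
    apply Continuous.integrable_of_hasCompactSupport
    · rw [heq]
      exact ((DF_contDiff (contDiff_VF k1 k2 k3 hu hd hP j) j).continuous).comp
        (continuous_id.prodMk continuous_const)
    · apply HasCompactSupport.intro (isCompact_closedBall (0:V3) R)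
      intro y hy
      have hyΩ := hmemΩ y hy
      have hev : (Vf k1 k2 k3 u d P t j) =ᶠ[nhds y] (fun _ => (0:ℝ)) :=
        Filter.eventuallyEq_of_mem (hΩopen.mem_nhds hyΩ)
          (fun z hz => hVF0 j (z,t) ⟨hz, htball⟩)
      show fderiv ℝ (Vf k1 k2 k3 u d P t j) y _ = 0
      rw [hev.fderiv_eq, fderiv_const_apply]
      simp
  -- final computation of the value
  calc ∫ x, TF (eF k1 k2 k3 u d) (x,t)
      = ∫ x, (-(nsq1 (fun y => u y t) x
            + ∑ i, (deriv (fun s => d x s i) t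
                + ∑ j, u x t j * pd (fun y => d y t i) j x) ^ 2)
          + ∑ j, pd (Vf k1 k2 k3 u d P t j) j x) := by
        congr 1
        funext x
        rw [hstar x, ← hIG x]
    _ = (∫ x, -(nsq1 (fun y => u y t) x
            + ∑ i, (deriv (fun s => d x s i) t
                + ∑ j, u x t j * pd (fun y => d y t i) j x) ^ 2))
          + ∫ x, ∑ j, pd (Vf k1 k2 k3 u d P t j) j x :=
        integral_add hIGint.neg (integrable_finset_sum _ fun j _ => hpdint j)
    _ = -(∫ x, (nsq1 (fun y => u y t) x
            + ∑ i, (deriv (fun s => d x s i) t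
                + ∑ j, u x t j * pd (fun y => d y t i) j x) ^ 2))
          + ∑ j, ∫ x, pd (Vf k1 k2 k3 u d P t j) j x := by
        rw [integral_neg, integral_finset_sum _ (fun j _ => hpdint j)]
    _ = -(∫ x, (nsq1 (fun y => u y t) x
            + ∑ i, (deriv (fun s => d x s i) t
                + ∑ j, u x t j * pd (fun y => d y t i) j x) ^ 2)) := by
        simp [hpdVf0]
end
end

section
/- Let k₁, k₂, k₃ be positive constants and a = min{k₁,k₂,k₃}. There exists a constant C > 0 depending only on k₁, k₂, k₃ such that for every smooth map d : ℝ³ → ℝ³ with |d(x)| = 1 for all x and d = d* outside a compact set for some constant unit vector d*, one has a ∫_{ℝ³} |∇d|² dx ≤ ∫_{ℝ³} W(d,∇d) dx ≤ C ∫_{ℝ³} |∇d|² dx. -/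
open MeasureTheory Real Set

noncomputable section

/-! ### Auxiliary lemmas -/

lemma contDiff_pd {f : (Fin 3 → ℝ) → ℝ} (hf : ContDiff ℝ (⊤ : ℕ∞) f) (j : Fin 3) :
    ContDiff ℝ (⊤ : ℕ∞) (pd f j) :=
  (hf.fderiv_right (by simp)).clm_apply contDiff_const

lemma pd_pd_comm {f : (Fin 3 → ℝ) → ℝ} (hf : ContDiff ℝ (⊤ : ℕ∞) f) (a b : Fin 3)
    (x : Fin 3 → ℝ) : pd (pd f a) b x = pd (pd f b) a x := by
  have h1 : ∀ y, HasFDerivAt f (fderiv ℝ f y) y := fun y =>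
    ((hf.differentiable (by simp)) y).hasFDerivAt
  have h2 : HasFDerivAt (fderiv ℝ f) (fderiv ℝ (fderiv ℝ f) x) x :=
    (((hf.fderiv_right (m := (⊤ : ℕ∞)) (by simp)).differentiable (by simp)) x).hasFDerivAt
  have hsym := second_derivative_symmetric h1 h2
  have key : ∀ c c' : Fin 3, pd (pd f c) c' x
      = fderiv ℝ (fderiv ℝ f) x (Pi.single c' 1) (Pi.single c 1) := by
    intro c c'
    have h3 := (h2.clm_apply (hasFDerivAt_const (Pi.single c 1 : Fin 3 → ℝ) x)).fderiv
    show fderiv ℝ (fun y => fderiv ℝ f y (Pi.single c 1)) x (Pi.single c' 1) = _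
    rw [h3]; simp
  rw [key a b, key b a, hsym]

lemma pd_zero_outside {f : (Fin 3 → ℝ) → ℝ} {K : Set (Fin 3 → ℝ)} (hK : IsClosed K)
    {c : ℝ} (h : ∀ x ∉ K, f x = c) (j : Fin 3) : ∀ x ∉ K, pd f j x = 0 := by
  intro x hx
  have hev : f =ᶠ[nhds x] fun _ => c := by
    filter_upwards [hK.isOpen_compl.mem_nhds hx] with y hy using h y hy
  simp [pd, hev.fderiv_eq]

lemma integrable_of_zero_outside {f : (Fin 3 → ℝ) → ℝ} (hf : Continuous f)
    {K : Set (Fin 3 → ℝ)} (hK : IsCompact K) (h : ∀ x ∉ K, f x = 0) : Integrable f :=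
  hf.integrable_of_hasCompactSupport (HasCompactSupport.intro hK h)

lemma integral_pd_swap (u v : (Fin 3 → ℝ) → ℝ) (hu : ContDiff ℝ (⊤ : ℕ∞) u) (hv : ContDiff ℝ (⊤ : ℕ∞) v)
    {K : Set (Fin 3 → ℝ)} (hK : IsCompact K) (cv : ℝ) (hvc : ∀ x ∉ K, v x = cv)
    (a b : Fin 3) :
    ∫ x, pd u a x * pd v b x = ∫ x, pd u b x * pd v a x := by
  set v0 : (Fin 3 → ℝ) → ℝ := fun x => v x - cv with hv0def
  have hv0 : ContDiff ℝ (⊤ : ℕ∞) v0 := hv.sub contDiff_const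
  have hv0K : ∀ x ∉ K, v0 x = 0 := fun x hx => by simp [hv0def, hvc x hx]
  have hpdv0 : ∀ j x, pd v0 j x = pd v j x := by
    intro j x; simp [pd, hv0def, fderiv_sub_const]
  have hpdv0K : ∀ (j : Fin 3) x, x ∉ K → pd v0 j x = 0 := fun j x hx => by
    rw [hpdv0]; exact pd_zero_outside hK.isClosed hvc j x hx
  have cpd : ∀ (f : (Fin 3 → ℝ) → ℝ), ContDiff ℝ (⊤ : ℕ∞) f → ∀ j, Continuous (pd f j) :=
    fun f hf j => (contDiff_pd hf j).continuous
  have ibp : ∀ c c' : Fin 3, ∫ x, pd u c x * pd v0 c' x = - ∫ x, pd (pd u c) c' x * v0 x := by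
    intro c c'
    exact integral_mul_fderiv_eq_neg_fderiv_mul_of_integrable
      (integrable_of_zero_outside ((cpd _ (contDiff_pd hu c) c').mul hv0.continuous) hK
        (fun x hx => mul_eq_zero_of_right _ (hv0K x hx)))
      (integrable_of_zero_outside ((cpd u hu c).mul (cpd v0 hv0 c')) hK
        (fun x hx => mul_eq_zero_of_right _ (hpdv0K c' x hx)))
      (integrable_of_zero_outside ((cpd u hu c).mul hv0.continuous) hK
        (fun x hx => mul_eq_zero_of_right _ (hv0K x hx)))
      (fun x _ => ((contDiff_pd hu c).differentiable (by simp)) x)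
      (fun x _ => (hv0.differentiable (by simp)) x)
  calc ∫ x, pd u a x * pd v b x = ∫ x, pd u a x * pd v0 b x := by simp_rw [hpdv0]
    _ = - ∫ x, pd (pd u a) b x * v0 x := ibp a b
    _ = - ∫ x, pd (pd u b) a x * v0 x := by simp_rw [pd_pd_comm hu a b]
    _ = ∫ x, pd u b x * pd v0 a x := (ibp b a).symm
    _ = ∫ x, pd u b x * pd v a x := by simp_rw [hpdv0]

lemma lagrange (z c : Fin 3 → ℝ) :
    (∑ i, z i * c i) ^ 2 + ∑ i, (crossV z c i) ^ 2 = (∑ i, z i ^ 2) * (∑ i, c i ^ 2) := by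
  simp [crossV, Fin.sum_univ_three]; ring

lemma OFW_lower {k1 k2 k3 : ℝ} (hk1 : 0 < k1) (hk2 : 0 < k2) (hk3 : 0 < k3)
    (z : Fin 3 → ℝ) (p : Fin 3 → Fin 3 → ℝ) (hz : ∑ i, z i ^ 2 = 1) :
    min k1 (min k2 k3) * ((p 0 0 + p 1 1 + p 2 2) ^ 2 + ∑ i, (cMat p i) ^ 2)
      ≤ OFW k1 k2 k3 z p := by
  set a := min k1 (min k2 k3) with ha
  have ha1 : a ≤ k1 := min_le_left _ _
  have ha2 : a ≤ k2 := le_trans (min_le_right _ _) (min_le_left _ _)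
  have ha3 : a ≤ k3 := le_trans (min_le_right _ _) (min_le_right _ _)
  have hL := lagrange z (cMat p)
  rw [hz, one_mul] at hL
  have h1 : (0:ℝ) ≤ (p 0 0 + p 1 1 + p 2 2) ^ 2 := sq_nonneg _
  have h2 : (0:ℝ) ≤ (∑ i, z i * cMat p i) ^ 2 := sq_nonneg _
  have h3 : (0:ℝ) ≤ ∑ i, (crossV z (cMat p) i) ^ 2 :=
    Finset.sum_nonneg fun i _ => sq_nonneg _
  unfold OFW
  nlinarith [mul_le_mul_of_nonneg_right ha1 h1, mul_le_mul_of_nonneg_right ha2 h2,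
    mul_le_mul_of_nonneg_right ha3 h3]

lemma OFW_upper {k1 k2 k3 : ℝ} (hk1 : 0 < k1) (hk2 : 0 < k2) (hk3 : 0 < k3)
    (z : Fin 3 → ℝ) (p : Fin 3 → Fin 3 → ℝ) (hz : ∑ i, z i ^ 2 = 1) :
    OFW k1 k2 k3 z p ≤ (3*k1 + 2*k2 + 2*k3) * (∑ i, ∑ j, (p i j) ^ 2) := by
  have hL := lagrange z (cMat p)
  rw [hz, one_mul] at hL
  have h2 : (0:ℝ) ≤ (∑ i, z i * cMat p i) ^ 2 := sq_nonneg _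
  have h3 : (0:ℝ) ≤ ∑ i, (crossV z (cMat p) i) ^ 2 :=
    Finset.sum_nonneg fun i _ => sq_nonneg _
  have hq : (∑ i, z i * cMat p i) ^ 2 ≤ ∑ i, (cMat p i) ^ 2 := by linarith
  have hr : (∑ i, (crossV z (cMat p) i) ^ 2) ≤ ∑ i, (cMat p i) ^ 2 := by linarith
  have htr : (p 0 0 + p 1 1 + p 2 2) ^ 2 ≤ 3 * (∑ i, ∑ j, (p i j) ^ 2) := by
    simp only [Fin.sum_univ_three]
    nlinarith [sq_nonneg (p 0 0 - p 1 1), sq_nonneg (p 0 0 - p 2 2), sq_nonneg (p 1 1 - p 2 2),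
      sq_nonneg (p 0 1), sq_nonneg (p 0 2), sq_nonneg (p 1 0), sq_nonneg (p 1 2),
      sq_nonneg (p 2 0), sq_nonneg (p 2 1)]
  have hc : (∑ i, (cMat p i) ^ 2) ≤ 2 * (∑ i, ∑ j, (p i j) ^ 2) := by
    simp [cMat, Fin.sum_univ_three]
    nlinarith [sq_nonneg (p 2 1 + p 1 2), sq_nonneg (p 0 2 + p 2 0), sq_nonneg (p 1 0 + p 0 1),
      sq_nonneg (p 0 0), sq_nonneg (p 1 1), sq_nonneg (p 2 2)]
  unfold OFW
  nlinarith [mul_le_mul_of_nonneg_left hq hk2.le, mul_le_mul_of_nonneg_left hr hk3.le,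
    mul_le_mul_of_nonneg_left htr hk1.le]

/-- Null-Lagrangian pointwise identity. -/
lemma trc_expand (p : Fin 3 → Fin 3 → ℝ) :
    (p 0 0 + p 1 1 + p 2 2) ^ 2 + ∑ i, (cMat p i) ^ 2
      = (∑ i, ∑ j, (p i j) ^ 2)
        + (2 * (p 0 0 * p 1 1 - p 0 1 * p 1 0)
          + (2 * (p 0 0 * p 2 2 - p 0 2 * p 2 0)
            + 2 * (p 1 1 * p 2 2 - p 1 2 * p 2 1))) := by
  simp [cMat, Fin.sum_univ_three]; ring

/-- For positive `k₁,k₂,k₃` with `a = min{k₁,k₂,k₃}`, there is `C` depending only on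
`k₁,k₂,k₃` such that for every smooth unit-vector field `d` agreeing with a constant unit
vector outside a compact set, `a ∫ |∇d|² dx ≤ ∫ W(d,∇d) dx ≤ C ∫ |∇d|² dx`. -/
theorem oseen_frank_energy_comparable_to_dirichlet
    (k1 k2 k3 : ℝ) (hk1 : 0 < k1) (hk2 : 0 < k2) (hk3 : 0 < k3) :
    ∃ C : ℝ, 0 < C ∧
    ∀ d : (Fin 3 → ℝ) → Fin 3 → ℝ, ContDiff ℝ (⊤ : ℕ∞) d →
      (∀ x, ∑ i, (d x i) ^ 2 = 1) →
    ∀ dstar : Fin 3 → ℝ, (∑ i, (dstar i) ^ 2 = 1) →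
    ∀ K : Set (Fin 3 → ℝ), IsCompact K → (∀ x ∉ K, d x = dstar) →
      min k1 (min k2 k3) * ∫ x, nsq1 d x ≤ ∫ x, OFW k1 k2 k3 (d x) (jac d x) ∧
      ∫ x, OFW k1 k2 k3 (d x) (jac d x) ≤ C * ∫ x, nsq1 d x := by
  refine ⟨3*k1 + 2*k2 + 2*k3, by linarith, ?_⟩
  intro d hd hdu dstar hdstar K hK hKd
  have hui : ∀ i, ContDiff ℝ (⊤ : ℕ∞) (fun y => d y i) := fun i => contDiff_pi.1 hd i
  have huc : ∀ (i : Fin 3) x, x ∉ K → d x i = dstar i := fun i x hx => by rw [hKd x hx]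
  have hpd0 : ∀ (i j : Fin 3) x, x ∉ K → pd (fun y => d y i) j x = 0 :=
    fun i j x hx => pd_zero_outside hK.isClosed (huc i) j x hx
  have hpdc : ∀ i j : Fin 3, Continuous (pd (fun y => d y i) j) :=
    fun i j => (contDiff_pd (hui i) j).continuous
  have hdc : ∀ i : Fin 3, Continuous fun x => d x i := fun i => (hui i).continuous
  -- basic integrands
  have hcont1 : Continuous (nsq1 d) := by
    unfold nsq1
    exact continuous_finset_sum _ fun i _ => continuous_finset_sum _ fun j _ => (hpdc i j).pow 2
  have hns0 : ∀ x ∉ K, nsq1 d x = 0 := by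
    intro x hx
    unfold nsq1
    simp [hpd0 _ _ x hx]
  have hint1 : Integrable (nsq1 d) := integrable_of_zero_outside hcont1 hK hns0
  -- jac entries
  have hjc : ∀ i j : Fin 3, Continuous fun x => jac d x i j := fun i j => hpdc i j
  have hj0 : ∀ x ∉ K, ∀ i j : Fin 3, jac d x i j = 0 := fun x hx i j => hpd0 i j x hx
  -- continuity of the energy density
  have hcont2 : Continuous fun x => OFW k1 k2 k3 (d x) (jac d x) := by
    unfold OFW cMat crossV
    simp [Fin.sum_univ_three]
    fun_prop
  have hOFW0 : ∀ x ∉ K, OFW k1 k2 k3 (d x) (jac d x) = 0 := by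
    intro x hx
    unfold OFW cMat crossV
    simp [hj0 x hx, Fin.sum_univ_three]
  have hint2 : Integrable fun x => OFW k1 k2 k3 (d x) (jac d x) :=
    integrable_of_zero_outside hcont2 hK hOFW0
  -- the auxiliary density (tr p)² + |c(p)|²
  set G : (Fin 3 → ℝ) → ℝ := fun x =>
    (jac d x 0 0 + jac d x 1 1 + jac d x 2 2) ^ 2 + ∑ i, (cMat (jac d x) i) ^ 2 with hGdef
  have hcontG : Continuous G := by
    rw [hGdef]
    unfold cMat
    simp [Fin.sum_univ_three]
    fun_prop
  have hG0 : ∀ x ∉ K, G x = 0 := by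
    intro x hx
    simp [hGdef, cMat, hj0 x hx, Fin.sum_univ_three]
  have hintG : Integrable G := integrable_of_zero_outside hcontG hK hG0
  -- products of jacobian entries are integrable
  have hprod_int : ∀ i j i' j' : Fin 3,
      Integrable fun x => jac d x i j * jac d x i' j' := fun i j i' j' =>
    integrable_of_zero_outside ((hjc i j).mul (hjc i' j')) hK
      (fun x hx => mul_eq_zero_of_left (hj0 x hx i j) _)
  -- integration by parts: null Lagrangian terms vanish
  have hswap : ∀ i j : Fin 3,
      ∫ x, jac d x i i * jac d x j j = ∫ x, jac d x i j * jac d x j i := by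
    intro i j
    exact integral_pd_swap (fun y => d y i) (fun y => d y j) (hui i) (hui j) hK
      (dstar j) (fun x hx => huc j x hx) i j
  have hnull : ∀ i j : Fin 3,
      ∫ x, (jac d x i i * jac d x j j - jac d x i j * jac d x j i) = 0 := by
    intro i j
    rw [integral_sub (hprod_int i i j j) (hprod_int i j j i), hswap i j, sub_self]
  have hnull_int : ∀ i j : Fin 3,
      Integrable fun x => jac d x i i * jac d x j j - jac d x i j * jac d x j i :=
    fun i j => (hprod_int i i j j).sub (hprod_int i j j i)
  -- ∫ G = ∫ nsq1
  have hGeq : ∫ x, G x = ∫ x, nsq1 d x := by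
    have hI01 : Integrable (fun x =>
        2 * (jac d x 0 0 * jac d x 1 1 - jac d x 0 1 * jac d x 1 0)) volume :=
      (hnull_int 0 1).const_mul 2
    have hI02 : Integrable (fun x =>
        2 * (jac d x 0 0 * jac d x 2 2 - jac d x 0 2 * jac d x 2 0)) volume :=
      (hnull_int 0 2).const_mul 2
    have hI12 : Integrable (fun x =>
        2 * (jac d x 1 1 * jac d x 2 2 - jac d x 1 2 * jac d x 2 1)) volume :=
      (hnull_int 1 2).const_mul 2
    have hI23 : Integrable (fun x =>
        2 * (jac d x 0 0 * jac d x 2 2 - jac d x 0 2 * jac d x 2 0)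
          + 2 * (jac d x 1 1 * jac d x 2 2 - jac d x 1 2 * jac d x 2 1)) volume :=
      hI02.add hI12
    have hIS : Integrable (fun x =>
        2 * (jac d x 0 0 * jac d x 1 1 - jac d x 0 1 * jac d x 1 0)
          + (2 * (jac d x 0 0 * jac d x 2 2 - jac d x 0 2 * jac d x 2 0)
            + 2 * (jac d x 1 1 * jac d x 2 2 - jac d x 1 2 * jac d x 2 1))) volume :=
      hI01.add hI23
    have e1 : ∫ x, 2 * (jac d x 0 0 * jac d x 1 1 - jac d x 0 1 * jac d x 1 0) = 0 := by
      rw [integral_const_mul, hnull 0 1, mul_zero]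
    have e2 : ∫ x, 2 * (jac d x 0 0 * jac d x 2 2 - jac d x 0 2 * jac d x 2 0) = 0 := by
      rw [integral_const_mul, hnull 0 2, mul_zero]
    have e3 : ∫ x, 2 * (jac d x 1 1 * jac d x 2 2 - jac d x 1 2 * jac d x 2 1) = 0 := by
      rw [integral_const_mul, hnull 1 2, mul_zero]
    have e23 : ∫ x, (2 * (jac d x 0 0 * jac d x 2 2 - jac d x 0 2 * jac d x 2 0)
        + 2 * (jac d x 1 1 * jac d x 2 2 - jac d x 1 2 * jac d x 2 1)) = 0 := by
      rw [integral_add hI02 hI12, e2, e3, add_zero]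
    have eS : ∫ x, (2 * (jac d x 0 0 * jac d x 1 1 - jac d x 0 1 * jac d x 1 0)
        + (2 * (jac d x 0 0 * jac d x 2 2 - jac d x 0 2 * jac d x 2 0)
          + 2 * (jac d x 1 1 * jac d x 2 2 - jac d x 1 2 * jac d x 2 1))) = 0 := by
      rw [integral_add hI01 hI23, e1, e23, add_zero]
    have hpt : G = fun x => nsq1 d x +
        (2 * (jac d x 0 0 * jac d x 1 1 - jac d x 0 1 * jac d x 1 0)
          + (2 * (jac d x 0 0 * jac d x 2 2 - jac d x 0 2 * jac d x 2 0)
            + 2 * (jac d x 1 1 * jac d x 2 2 - jac d x 1 2 * jac d x 2 1))) := by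
      funext x
      have := trc_expand (jac d x)
      simpa [hGdef, nsq1, jac] using this
    calc ∫ x, G x
        = ∫ x, (nsq1 d x +
          (2 * (jac d x 0 0 * jac d x 1 1 - jac d x 0 1 * jac d x 1 0)
            + (2 * (jac d x 0 0 * jac d x 2 2 - jac d x 0 2 * jac d x 2 0)
              + 2 * (jac d x 1 1 * jac d x 2 2 - jac d x 1 2 * jac d x 2 1)))) := by rw [hpt]
      _ = (∫ x, nsq1 d x) +
          ∫ x, (2 * (jac d x 0 0 * jac d x 1 1 - jac d x 0 1 * jac d x 1 0)
            + (2 * (jac d x 0 0 * jac d x 2 2 - jac d x 0 2 * jac d x 2 0)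
              + 2 * (jac d x 1 1 * jac d x 2 2 - jac d x 1 2 * jac d x 2 1))) :=
        integral_add hint1 hIS
      _ = ∫ x, nsq1 d x := by rw [eS, add_zero]
  constructor
  · -- lower bound
    have step : min k1 (min k2 k3) * ∫ x, G x ≤ ∫ x, OFW k1 k2 k3 (d x) (jac d x) := by
      rw [← integral_const_mul]
      exact integral_mono (hintG.const_mul _) hint2
        (fun x => OFW_lower hk1 hk2 hk3 (d x) (jac d x) (hdu x))
    rw [← hGeq]
    exact step
  · -- upper bound
    rw [← integral_const_mul]
    exact integral_mono hint2 (hint1.const_mul _)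
      (fun x => OFW_upper hk1 hk2 hk3 (d x) (jac d x) (hdu x))
end
end
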